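/- arXiv:1405.7145 — 6 statements merged into one kernel-verified Lean document; each statement's English description precedes it below -/
import Mathlib

section
/- Let D be a design with exactly n = R ≥ 2 factors of strength R−1, each factor given a normalized orthogonal coding. Let P = ∏_{i=1}^{R} s i and let r = N mod P. Then the projection frequency of the full factor set satisfies a_R({1,…,R}) ≥ r(P − r)/N², with equality if and only if D has weak strength R, i.e., every point x of the full factorial Fin(s 1) × ⋯ × Fin(s R) occurs among the rows of D either ⌊N/P⌋ or ⌊N/P⌋ + 1 times. -/
/-!
Adjoin the constant column to every coding. The augmented coding matrices are square with
orthogonal columns, hence they have orthogonal rows, and so the tensor-product columns indexed by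
`j : ∀ i, Option (Fin (s i - 1))` satisfy a Parseval identity: the sum of their squared column
sums is `P ∑ₓ cₓ²`, where `cₓ` is the number of runs at the point `x`. The intercept column
contributes `N²`, the full interaction columns contribute `N² a_R`, and every other column sums to
zero by strength `R - 1`. Hence `N² a_R = P ∑ₓ cₓ² - N²`, and writing `N = qP + r` this equals
`r(P - r) + P ∑ₓ (cₓ - q)(cₓ - q - 1)`, a sum of nonnegative terms that vanish exactly when
`cₓ ∈ {q, q + 1}`.
-/

open Finset Matrix

/-- A design `D` (rows = runs, coordinates = factors) has strength `t` if in every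
projection onto `t` factors every level combination occurs equally often. -/
def hasStrength {N n : ℕ} (s : Fin n → ℕ) (D : Fin N → ∀ i, Fin (s i)) (t : ℕ) : Prop :=
  ∀ T : Finset (Fin n), T.card = t → ∀ x : ∀ i, Fin (s i),
    (Finset.univ.filter fun r => ∀ i ∈ T, D r i = x i).card = N / ∏ i ∈ T, s i

/-- Normalized orthogonal coding: contrast columns have zero sum and
`Cᵀ C = m • 1` (squared length `m`, pairwise orthogonal). -/
def isNOC {m : ℕ} (C : Fin m → Fin (m - 1) → ℝ) : Prop :=
  (∀ j, ∑ l, C l j = 0) ∧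
    ∀ j j', ∑ l, C l j * C l j' = if j = j' then (m : ℝ) else 0

/-- Column (indexed by the tuple `j`) of the interaction model matrix of the set `U`
of factors, evaluated at run `r`. -/
def intCol {N n : ℕ} {s : Fin n → ℕ} (C : ∀ i, Fin (s i) → Fin (s i - 1) → ℝ)
    (D : Fin N → ∀ i, Fin (s i)) (U : Finset (Fin n))
    (j : ∀ i : U, Fin (s i.1 - 1)) (r : Fin N) : ℝ :=
  ∏ i : U, C i.1 (D r i.1) (j i)

/-- Projection frequency `a_k(U)`: sum of squared column sums of the interaction
model matrix of `U`, divided by `N²`. -/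
noncomputable def projFreq {N n : ℕ} {s : Fin n → ℕ}
    (C : ∀ i, Fin (s i) → Fin (s i - 1) → ℝ)
    (D : Fin N → ∀ i, Fin (s i)) (U : Finset (Fin n)) : ℝ :=
  (∑ j : ∀ i : U, Fin (s i.1 - 1), (∑ r, intCol C D U j r) ^ 2) / (N : ℝ) ^ 2

section Orthogonal

variable {ι κ : Type*} [Fintype ι] [Fintype κ]

theorem sum_sq_sum_mul_of_orthogonal [DecidableEq ι] {v : ι → κ → ℝ} {c : ℝ}
    (hv : ∀ x y, ∑ j, v x j * v y j = if x = y then c else 0) (a : ι → ℝ) :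
    ∑ j, (∑ x, a x * v x j) ^ 2 = c * ∑ x, a x ^ 2 := by
  calc ∑ j, (∑ x, a x * v x j) ^ 2
      = ∑ x, ∑ y, a x * a y * ∑ j, v x j * v y j := by
        simp_rw [sq, Finset.sum_mul_sum, Finset.mul_sum]
        rw [Finset.sum_comm]
        refine Finset.sum_congr rfl fun x _ => ?_
        rw [Finset.sum_comm]
        refine Finset.sum_congr rfl fun y _ => Finset.sum_congr rfl fun j _ => by ring
    _ = c * ∑ x, a x ^ 2 := by
        simp_rw [hv, mul_ite, mul_zero, Finset.sum_ite_eq, Finset.mem_univ, if_true,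
          Finset.mul_sum]
        exact Finset.sum_congr rfl fun x _ => by ring

theorem sum_comp_eq_sum_card_fiber_smul [DecidableEq κ] {M : Type*} [AddCommMonoid M]
    (g : ι → κ) (f : κ → M) : ∑ i, f (g i) = ∑ j, #{i | g i = j} • f j := by
  rw [← Finset.sum_fiberwise' Finset.univ g f]
  simp only [Finset.sum_const]

theorem sum_prod_mul_prod_of_orthogonal [DecidableEq ι] {α β : ι → Type*}
    [∀ i, Fintype (α i)] [∀ i, DecidableEq (α i)] [∀ i, Fintype (β i)]
    {B : ∀ i, α i → β i → ℝ} {c : ι → ℝ}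
    (hB : ∀ i a a', ∑ o, B i a o * B i a' o = if a = a' then c i else 0) (x y : ∀ i, α i) :
    ∑ j : ∀ i, β i, (∏ i, B i (x i) (j i)) * ∏ i, B i (y i) (j i) =
      if x = y then ∏ i, c i else 0 := by
  simp_rw [← Finset.prod_mul_distrib]
  rw [← Fintype.prod_sum fun i o => B i (x i) o * B i (y i) o]
  simp_rw [hB, Fintype.prod_ite_zero, funext_iff]

end Orthogonal

def augCoding {m : ℕ} (C : Fin m → Fin (m - 1) → ℝ) (l : Fin m) : Option (Fin (m - 1)) → ℝ :=
  fun o => o.elim 1 (C l)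

/-- The augmented coding matrix is square with orthogonal columns of squared length `m`,
hence its rows are orthogonal too. -/
theorem isNOC.sum_augCoding_mul_augCoding {m : ℕ} (hm : m ≠ 0) {C : Fin m → Fin (m - 1) → ℝ}
    (hC : isNOC C) (l l' : Fin m) :
    ∑ o, augCoding C l o * augCoding C l' o = if l = l' then (m : ℝ) else 0 := by
  let B : Matrix (Fin m) (Option (Fin (m - 1))) ℝ := Matrix.of (augCoding C)
  have hcol : Bᵀ * B = (m : ℝ) • 1 := by
    ext (_ | j) (_ | j') <;>
      simp [B, Matrix.mul_apply, Matrix.one_apply, augCoding, hC.1, hC.2, mul_comm]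
  have hm' : (m : ℝ) ≠ 0 := Nat.cast_ne_zero.2 hm
  have e : Option (Fin (m - 1)) ≃ Fin m := Fintype.equivOfCardEq (by simp; omega)
  have hinv : B * ((m : ℝ)⁻¹ • Bᵀ) = 1 := by
    rw [← Matrix.mul_eq_one_comm_of_equiv e, Matrix.smul_mul, hcol, smul_smul,
      inv_mul_cancel₀ hm', one_smul]
  have hrow : B * Bᵀ = (m : ℝ) • 1 := by
    rw [Matrix.mul_smul] at hinv
    rw [← hinv, smul_smul, mul_inv_cancel₀ hm', one_smul]
  simpa [B, Matrix.mul_apply, Matrix.one_apply] using congrFun (congrFun hrow l) l'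

theorem Fintype.sum_pi_option_of_mixed_eq_zero {ι M : Type*} [Fintype ι] [DecidableEq ι]
    [Nonempty ι] {β : ι → Type*} [∀ i, Fintype (β i)] [∀ i, DecidableEq (β i)]
    [AddCommMonoid M] (F : (∀ i, Option (β i)) → M)
    (hF : ∀ j u v, j u = none → j v ≠ none → F j = 0) :
    ∑ j, F j = F (fun _ => none) + ∑ a : ∀ i, β i, F (fun i => some (a i)) := by
  have hinj : Function.Injective fun (a : ∀ i, β i) i => some (a i) :=
    fun a b h => funext fun i => Option.some_injective _ (congrFun h i)
  have hnone : (fun _ => none) ∉ Finset.univ.image fun (a : ∀ i, β i) i => some (a i) := by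
    simp [funext_iff]
  rw [← Finset.sum_image fun a _ b _ h => hinj h, ← Finset.sum_insert hnone]
  refine (Finset.sum_subset (Finset.subset_univ _) fun j _ hj => ?_).symm
  simp only [Finset.mem_insert, Finset.mem_image, Finset.mem_univ, true_and, not_or,
    not_exists, funext_iff, not_forall] at hj
  obtain ⟨⟨v, hv⟩, hsome⟩ := hj
  obtain ⟨u, hu⟩ : ∃ u, j u = none := by
    by_contra! h
    obtain ⟨i, hi⟩ := hsome fun i => (j i).get (Option.ne_none_iff_isSome.1 (h i))
    simp at hi
  exact hF j u v hu hv

theorem sum_prod_eq_zero_of_card_filter_eq {ρ ι : Type*} [Fintype ρ] [Fintype ι]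
    [DecidableEq ι] {α : ι → Type*} [∀ i, Fintype (α i)] [∀ i, DecidableEq (α i)]
    (D : ρ → ∀ i, α i) {T : Finset ι} {c : ℕ}
    (hD : ∀ x : ∀ i, α i, #{r | ∀ i ∈ T, D r i = x i} = c) {f : ∀ i, α i → ℝ}
    (hf : ∀ i ∉ T, ∀ w, f i w = 1) {v : ι} (hv : ∑ w, f v w = 0) :
    ∑ r, ∏ i, f i (D r i) = 0 := by
  set K : ℝ := ∏ i, if i ∈ T then 1 else (Fintype.card (α i) : ℝ)
  -- Summing over all `y` that agree with `D r` on `T` counts the row `K` times.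
  have hrow : ∀ r, ∑ y : ∀ i, α i, (if ∀ i ∈ T, D r i = y i then ∏ i, f i (y i) else 0) =
      K * ∏ i, f i (D r i) := by
    intro r
    let G : ∀ i, α i → ℝ := fun i w => if i ∈ T then (if D r i = w then f i w else 0) else f i w
    have hG : ∀ y : ∀ i, α i,
        (if ∀ i ∈ T, D r i = y i then ∏ i, f i (y i) else 0) = ∏ i, G i (y i) := by
      intro y
      split_ifs with h
      · exact Finset.prod_congr rfl fun i _ => by by_cases hi : i ∈ T <;> simp [G, hi, h]
      · obtain ⟨i, hi, hne⟩ := not_forall₂.1 h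
        exact (Finset.prod_eq_zero (Finset.mem_univ i) (by simp [G, hi, hne])).symm
    rw [Finset.sum_congr rfl fun y _ => hG y, ← Fintype.prod_sum, ← Finset.prod_mul_distrib]
    refine Finset.prod_congr rfl fun i _ => ?_
    by_cases hi : i ∈ T <;> simp [G, hi, hf]
  have hK : K * ∑ r, ∏ i, f i (D r i) = 0 := by
    rw [Finset.mul_sum, ← Finset.sum_congr rfl fun r _ => hrow r, Finset.sum_comm]
    simp_rw [Finset.sum_ite, Finset.sum_const_zero, add_zero, Finset.sum_const, hD,
      ← Finset.smul_sum]
    rw [← Fintype.prod_sum, Finset.prod_eq_zero (Finset.mem_univ v) hv, smul_zero]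
  rcases isEmpty_or_nonempty ρ with hρ | ⟨⟨r₀⟩⟩
  · exact Finset.sum_of_isEmpty _
  · refine (mul_eq_zero.1 hK).resolve_left (Finset.prod_ne_zero_iff.2 fun i _ => ?_)
    have : Nonempty (α i) := ⟨D r₀ i⟩
    split_ifs <;> simp

theorem sub_mul_sub_sub_one_nonneg (n q : ℕ) : 0 ≤ ((n : ℝ) - q) * ((n : ℝ) - q - 1) := by
  rcases le_or_gt n q with h | h
  · have : (n : ℝ) ≤ q := Nat.cast_le.2 h
    nlinarith
  · have : (q : ℝ) + 1 ≤ n := by exact_mod_cast h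
    nlinarith

theorem sub_mul_sub_sub_one_eq_zero_iff (n q : ℕ) :
    ((n : ℝ) - q) * ((n : ℝ) - q - 1) = 0 ↔ n = q ∨ n = q + 1 := by
  rw [mul_eq_zero, sub_eq_zero, sub_sub, sub_eq_zero]
  norm_cast

theorem card_mul_sum_sq_sub_sq_eq {κ : Type*} [Fintype κ] (a : κ → ℕ) {N P : ℕ}
    (hN : ∑ x, a x = N) (hP : Fintype.card κ = P) :
    (P : ℝ) * ∑ x, (a x : ℝ) ^ 2 - (N : ℝ) ^ 2 =
      P * ∑ x, ((a x : ℝ) - (N / P : ℕ)) * ((a x : ℝ) - (N / P : ℕ) - 1) +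
        (N % P : ℕ) * ((P : ℝ) - (N % P : ℕ)) := by
  have hNR : (N : ℝ) = P * (N / P : ℕ) + (N % P : ℕ) := by
    exact_mod_cast (Nat.div_add_mod N P).symm
  have hsum : ∑ x, (a x : ℝ) = N := by exact_mod_cast hN
  have hexp : ∀ x, ((a x : ℝ) - (N / P : ℕ)) * ((a x : ℝ) - (N / P : ℕ) - 1) =
      (a x : ℝ) ^ 2 - (2 * (N / P : ℕ) + 1) * a x + (N / P : ℕ) * ((N / P : ℕ) + 1) :=
    fun x => by ring
  simp_rw [hexp, Finset.sum_add_distrib, Finset.sum_sub_distrib, ← Finset.mul_sum, hsum,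
    Finset.sum_const, Finset.card_univ, hP, nsmul_eq_mul]
  rw [hNR]
  ring

theorem le_card_mul_sum_sq_sub_sq_and_eq_iff {κ : Type*} [Fintype κ] (a : κ → ℕ) {N P : ℕ}
    (hN : ∑ x, a x = N) (hP : Fintype.card κ = P) :
    ((N % P : ℕ) : ℝ) * ((P : ℝ) - (N % P : ℕ)) ≤ P * ∑ x, (a x : ℝ) ^ 2 - (N : ℝ) ^ 2 ∧
      ((P : ℝ) * ∑ x, (a x : ℝ) ^ 2 - (N : ℝ) ^ 2 = (N % P : ℕ) * ((P : ℝ) - (N % P : ℕ)) ↔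
        ∀ x, a x = N / P ∨ a x = N / P + 1) := by
  rw [card_mul_sum_sq_sub_sq_eq a hN hP, add_eq_right, Finset.mul_sum]
  have hterm : ∀ x, 0 ≤ (P : ℝ) * (((a x : ℝ) - (N / P : ℕ)) * ((a x : ℝ) - (N / P : ℕ) - 1)) :=
    fun x => mul_nonneg (Nat.cast_nonneg P) (sub_mul_sub_sub_one_nonneg (a x) (N / P))
  refine ⟨le_add_of_nonneg_left (Finset.sum_nonneg fun x _ => hterm x), ?_⟩
  rw [Finset.sum_eq_zero_iff_of_nonneg fun x _ => hterm x]
  refine forall_congr' fun x => ?_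
  have : Nonempty κ := ⟨x⟩
  have hP0 : (P : ℝ) ≠ 0 := Nat.cast_ne_zero.2 (hP ▸ Fintype.card_ne_zero)
  rw [← sub_mul_sub_sub_one_eq_zero_iff (a x) (N / P)]
  simp only [Finset.mem_univ, true_implies, mul_eq_zero, hP0, false_or]

theorem projFreq_univ {N n : ℕ} {s : Fin n → ℕ} (C : ∀ i, Fin (s i) → Fin (s i - 1) → ℝ)
    (D : Fin N → ∀ i, Fin (s i)) :
    projFreq C D Finset.univ =
      (∑ a : ∀ i, Fin (s i - 1), (∑ r, ∏ i, C i (D r i) (a i)) ^ 2) / (N : ℝ) ^ 2 := by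
  rw [projFreq]
  congr 1
  refine Fintype.sum_equiv (Equiv.piCongrLeft' _ (Equiv.subtypeUnivEquiv Finset.mem_univ))
    _ _ fun a => ?_
  simp only [intCol]
  congr 1
  refine Finset.sum_congr rfl fun r _ => ?_
  exact Fintype.prod_equiv (Equiv.subtypeUnivEquiv Finset.mem_univ) _ _ fun i => rfl

section Design

variable {N R : ℕ} {s : Fin R → ℕ} {D : Fin N → ∀ i, Fin (s i)}
  {C : ∀ i, Fin (s i) → Fin (s i - 1) → ℝ}

def augColSum (C : ∀ i, Fin (s i) → Fin (s i - 1) → ℝ) (D : Fin N → ∀ i, Fin (s i))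
    (j : ∀ i, Option (Fin (s i - 1))) : ℝ :=
  ∑ r, ∏ i, augCoding (C i) (D r i) (j i)

theorem sum_augColSum_sq (hs : ∀ i, s i ≠ 0) (hC : ∀ i, isNOC (C i)) :
    ∑ j, augColSum C D j ^ 2 = (∏ i, s i : ℕ) * ∑ x, (#{r | D r = x} : ℝ) ^ 2 := by
  have horth := sum_prod_mul_prod_of_orthogonal fun i => (hC i).sum_augCoding_mul_augCoding (hs i)
  push_cast
  rw [← sum_sq_sum_mul_of_orthogonal horth]
  refine Finset.sum_congr rfl fun j _ => ?_
  rw [augColSum, sum_comp_eq_sum_card_fiber_smul D fun x => ∏ i, augCoding (C i) (x i) (j i)]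
  exact congrArg (· ^ 2) (Finset.sum_congr rfl fun x _ => nsmul_eq_mul _ _)

theorem augColSum_eq_zero (hD : hasStrength s D (R - 1)) (hC : ∀ i, isNOC (C i))
    {j : ∀ i, Option (Fin (s i - 1))} {u v : Fin R} (hu : j u = none) (hv : j v ≠ none) :
    augColSum C D j = 0 := by
  obtain ⟨b, hb⟩ := Option.ne_none_iff_exists'.1 hv
  -- `convert` bridges two decidability instances of the bounded quantifier.
  refine sum_prod_eq_zero_of_card_filter_eq (f := fun i w => augCoding (C i) w (j i)) D
    (fun x => by convert hD (Finset.univ.erase u) (by simp) x) (fun i hi w => ?_) (v := v) ?_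
  · obtain rfl : i = u := by simpa using hi
    simp [hu, augCoding]
  · simpa [hb, augCoding] using (hC v).1 b

theorem sum_augColSum_sq_eq (hR : R ≠ 0) (hD : hasStrength s D (R - 1))
    (hC : ∀ i, isNOC (C i)) :
    ∑ j, augColSum C D j ^ 2 =
      (N : ℝ) ^ 2 + ∑ a : ∀ i, Fin (s i - 1), (∑ r, ∏ i, C i (D r i) (a i)) ^ 2 := by
  have : Nonempty (Fin R) := Fin.pos_iff_nonempty.1 (Nat.pos_of_ne_zero hR)
  rw [Fintype.sum_pi_option_of_mixed_eq_zero _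
    fun j u v hu hv => by rw [augColSum_eq_zero hD hC hu hv, sq, zero_mul]]
  simp [augColSum, augCoding]

theorem projFreq_univ_eq (hR : R ≠ 0) (hs : ∀ i, s i ≠ 0) (hD : hasStrength s D (R - 1))
    (hC : ∀ i, isNOC (C i)) :
    projFreq C D Finset.univ =
      ((∏ i, s i : ℕ) * ∑ x, (#{r | D r = x} : ℝ) ^ 2 - (N : ℝ) ^ 2) / (N : ℝ) ^ 2 := by
  rw [projFreq_univ, ← sum_augColSum_sq hs hC, sum_augColSum_sq_eq hR hD hC, add_sub_cancel_left]

end Design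

/-- for a design with exactly `n = R` factors of strength `R-1`, the
projection frequency of the full factor set satisfies `a_R ≥ r(P - r)/N²` where
`P = ∏ s i` and `r = N mod P`, with equality iff every point of the full factorial
occurs `⌊N/P⌋` or `⌊N/P⌋ + 1` times among the rows of `D` (weak strength `R`). -/
theorem statement8 {N R : ℕ} (hN : 1 ≤ N) (hR : 2 ≤ R)
    {s : Fin R → ℕ} (hs : ∀ i, 2 ≤ s i)
    (D : Fin N → ∀ i, Fin (s i)) (hD : hasStrength s D (R - 1))
    (C : ∀ i, Fin (s i) → Fin (s i - 1) → ℝ) (hC : ∀ i, isNOC (C i)) :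
    ((N % ∏ i, s i : ℕ) : ℝ) * ((∏ i, s i : ℕ) - (N % ∏ i, s i : ℕ)) / (N : ℝ) ^ 2
        ≤ projFreq C D Finset.univ ∧
      (projFreq C D Finset.univ =
          ((N % ∏ i, s i : ℕ) : ℝ) * ((∏ i, s i : ℕ) - (N % ∏ i, s i : ℕ)) / (N : ℝ) ^ 2 ↔
        ∀ x : ∀ i, Fin (s i),
          (Finset.univ.filter fun r => D r = x).card = N / ∏ i, s i ∨
          (Finset.univ.filter fun r => D r = x).card = N / ∏ i, s i + 1) := by
  have hN2 : (0 : ℝ) < (N : ℝ) ^ 2 := pow_pos (Nat.cast_pos.2 hN) 2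
  have hcount : ∑ x, #{r | D r = x} = N := by
    simpa using (Finset.card_eq_sum_card_fiberwise (s := Finset.univ) fun r _ =>
      Finset.mem_univ (D r)).symm
  have hcard : Fintype.card (∀ i, Fin (s i)) = ∏ i, s i := by simp
  obtain ⟨hle, heq⟩ := le_card_mul_sum_sq_sub_sq_and_eq_iff _ hcount hcard
  rw [projFreq_univ_eq (by omega) (fun i => by have := hs i; omega) hD hC]
  exact ⟨div_le_div_of_nonneg_right hle hN2.le, (div_left_inj' hN2.ne').trans heq⟩
end

section
/- Fix N, n ≥ R ≥ 2 and level sizes s : Fin n → ℕ with s i ≥ 2, and fix normalized orthogonal codings. Suppose that no design with these parameters has strength R. If D is a design with these parameters of weak strength R, then D maximizes GR among all designs with these parameters of strength R−1: for every design D' with the same N, n, s of strength R−1, GR(D') ≤ GR(D). -/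
open Finset Matrix

/-- Generalized resolution `GR = R + 1 - sqrt(max_U a_R(U)/(min_{i∈U} s i - 1))`,
the max running over all `R`-element sets of factors. -/
noncomputable def GR {N n : ℕ} {s : Fin n → ℕ} (R : ℕ)
    (C : ∀ i, Fin (s i) → Fin (s i - 1) → ℝ) (D : Fin N → ∀ i, Fin (s i)) : ℝ :=
  (R : ℝ) + 1 - Real.sqrt (sSup {v : ℝ | ∃ U : Finset (Fin n), U.card = R ∧
    v = projFreq C D U / (((sInf (s '' (U : Set (Fin n))) : ℕ) : ℝ) - 1)})

/-- Weak strength `t`: strength `t-1`, and in every projection onto `t` factors every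
level combination occurs `⌊N/∏ s i⌋` or `⌊N/∏ s i⌋ + 1` times. -/
def weakStrength {N n : ℕ} (s : Fin n → ℕ) (D : Fin N → ∀ i, Fin (s i)) (t : ℕ) : Prop :=
  hasStrength s D (t - 1) ∧
    ∀ U : Finset (Fin n), U.card = t → ∀ x : ∀ i, Fin (s i),
      (Finset.univ.filter fun r => ∀ i ∈ U, D r i = x i).card = N / ∏ i ∈ U, s i ∨
      (Finset.univ.filter fun r => ∀ i ∈ U, D r i = x i).card = N / ∏ i ∈ U, s i + 1

lemma rowNOC {m : ℕ} (hm : 1 ≤ m) (C : Fin m → Fin (m - 1) → ℝ) (hC : isNOC C)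
    (l l' : Fin m) : ∑ j, C l j * C l' j = (if l = l' then (m : ℝ) else 0) - 1 := by
  obtain ⟨m', rfl⟩ : ∃ m', m = m' + 1 := ⟨m - 1, by omega⟩
  set B : Matrix (Fin (m' + 1)) (Fin (m' + 1)) ℝ :=
    fun l k => Fin.cases 1 (fun j => C l j) k with hB
  have hc : ((m' : ℝ) + 1) ≠ 0 := by positivity
  have hBtB : Bᵀ * B = ((m' : ℝ) + 1) • 1 := by
    ext k k'
    simp only [Matrix.mul_apply, Matrix.transpose_apply, Matrix.smul_apply, Matrix.one_apply]
    induction k using Fin.cases with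
    | zero =>
      induction k' using Fin.cases with
      | zero => simp [hB]
      | succ j' => simp [hB, hC.1 j', (Fin.succ_ne_zero j').symm]
    | succ j =>
      induction k' using Fin.cases with
      | zero => simpa [hB, Fin.succ_ne_zero j] using hC.1 j
      | succ j' =>
        have h := hC.2 j j'
        simp only [hB, Fin.cases_succ]
        rw [show (∑ x : Fin (m'+1), C x j * C x j') = ∑ l, C l j * C l j' from rfl, h]
        by_cases hjj : j = j' <;> simp [hjj, Fin.succ_inj]
  have h1 : (((m' : ℝ) + 1)⁻¹ • Bᵀ) * B = 1 := by
    rw [Matrix.smul_mul, hBtB, smul_smul, inv_mul_cancel₀ hc, one_smul]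
  have h2 : B * (((m' : ℝ) + 1)⁻¹ • Bᵀ) = 1 := mul_eq_one_comm.mpr h1
  have h3 : B * Bᵀ = ((m' : ℝ) + 1) • 1 := by
    have h := congrArg (fun M => ((m' : ℝ) + 1) • M) h2
    simpa [Matrix.mul_smul, smul_smul, mul_inv_cancel₀ hc] using h
  have h4 := congrFun (congrFun h3 l) l'
  simp only [Matrix.mul_apply, Matrix.smul_apply, Matrix.one_apply, Matrix.transpose_apply] at h4
  rw [Fin.sum_univ_succ] at h4
  simp only [hB, Fin.cases_zero, Fin.cases_succ, one_mul] at h4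
  rw [show (∑ j, C l j * C l' j) = ∑ j : Fin m', C l j * C l' j from rfl]
  push_cast
  by_cases hll : l = l' <;> simp [hll] at h4 ⊢ <;> linarith

def cellCount {N n : ℕ} (s : Fin n → ℕ) (E : Fin N → ∀ i, Fin (s i))
    (T : Finset (Fin n)) (y : ∀ i : T, Fin (s i.1)) : ℕ :=
  (Finset.univ.filter fun r => ∀ i : T, E r i.1 = y i).card

/-- extend a partial tuple to a full one -/

def extFun {n : ℕ} {s : Fin n → ℕ} (hs : ∀ i, 2 ≤ s i) (T : Finset (Fin n))
    (y : ∀ i : T, Fin (s i.1)) (i : Fin n) : Fin (s i) :=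
  if h : i ∈ T then y ⟨i, h⟩ else ⟨0, by have := hs i; omega⟩

lemma cellCount_eq {N n : ℕ} {s : Fin n → ℕ} (hs : ∀ i, 2 ≤ s i)
    (E : Fin N → ∀ i, Fin (s i)) (T : Finset (Fin n)) (y : ∀ i : T, Fin (s i.1)) :
    cellCount s E T y
      = (Finset.univ.filter fun r => ∀ i ∈ T, E r i = extFun hs T y i).card := by
  unfold cellCount
  congr 1
  apply Finset.filter_congr
  intro r _
  constructor
  · intro h i hi
    rw [extFun, dif_pos hi]; exact h ⟨i, hi⟩
  · intro h i
    have := h i.1 i.2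
    rwa [extFun, dif_pos i.2] at this

lemma cell_partition {N n : ℕ} {s : Fin n → ℕ}
    (E : Fin N → ∀ i, Fin (s i)) (T : Finset (Fin n)) :
    ∑ y : ∀ i : T, Fin (s i.1), cellCount s E T y = N := by
  classical
  have := Finset.card_eq_sum_card_fiberwise
    (f := fun r : Fin N => (fun i : T => E r i.1)) (s := Finset.univ) (t := Finset.univ)
    (fun x _ => Finset.mem_univ _)
  rw [Finset.card_univ, Fintype.card_fin] at this
  refine Eq.trans ?_ this.symm
  apply Finset.sum_congr rfl
  intro y _
  unfold cellCount
  congr 1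
  apply Finset.filter_congr
  intro r _
  simp [funext_iff]

lemma card_cells {n : ℕ} {s : Fin n → ℕ} (T : Finset (Fin n)) :
    Fintype.card (∀ i : T, Fin (s i.1)) = ∏ i ∈ T, s i := by
  rw [Fintype.card_pi]
  rw [← Finset.prod_coe_sort T (fun i => s i)]
  simp

lemma strength_dvd {N n : ℕ} {s : Fin n → ℕ} (hs : ∀ i, 2 ≤ s i)
    {E : Fin N → ∀ i, Fin (s i)} {t : ℕ} (hE : hasStrength s E t)
    (T : Finset (Fin n)) (hT : T.card = t) : (∏ i ∈ T, s i) ∣ N := by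
  classical
  have hpart := cell_partition E T
  have hcells : ∀ y : ∀ i : T, Fin (s i.1), cellCount s E T y = N / ∏ i ∈ T, s i := by
    intro y
    rw [cellCount_eq hs]
    exact hE T hT (extFun hs T y)
  rw [Finset.sum_congr rfl (fun y _ => hcells y), Finset.sum_const, Finset.card_univ,
    card_cells, smul_eq_mul] at hpart
  exact ⟨_, hpart.symm⟩

lemma strength_mono {N n : ℕ} {s : Fin n → ℕ} (hs : ∀ i, 2 ≤ s i)
    {E : Fin N → ∀ i, Fin (s i)} {t : ℕ} (ht : t ≤ n) (hE : hasStrength s E t)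
    {u : ℕ} (hu : u ≤ t) : hasStrength s E u := by
  classical
  -- downward induction
  have step : ∀ v, v + 1 ≤ t → hasStrength s E (v + 1) → hasStrength s E v := by
    intro v hv hEv T hT x
    have hTu : T ≠ Finset.univ := by
      intro h
      rw [h, Finset.card_univ, Fintype.card_fin] at hT
      omega
    obtain ⟨i, -, hiT⟩ := Finset.exists_of_ssubset (Finset.ssubset_univ_iff.mpr hTu)
    have hins : (insert i T).card = v + 1 := by rw [Finset.card_insert_of_notMem hiT, hT]
    have hdvd : (∏ j ∈ insert i T, s j) ∣ N := strength_dvd hs hEv _ hins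
    rw [Finset.prod_insert hiT] at hdvd
    have hfib := Finset.card_eq_sum_card_fiberwise
      (f := fun r : Fin N => E r i) (s := Finset.univ.filter fun r => ∀ j ∈ T, E r j = x j)
      (t := Finset.univ) (fun r _ => Finset.mem_univ _)
    have heach : ∀ l : Fin (s i),
        ((Finset.univ.filter fun r => ∀ j ∈ T, E r j = x j).filter
          fun r => E r i = l).card = N / (s i * ∏ j ∈ T, s j) := by
      intro l
      rw [Finset.filter_filter]
      have := hEv (insert i T) hins (Function.update x i l)
      rw [Finset.prod_insert hiT] at this
      rw [← this]
      congr 1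
      apply Finset.filter_congr
      intro r _
      simp only [Finset.forall_mem_insert, Function.update_self]
      constructor
      · rintro ⟨h1, h2⟩
        refine ⟨h2, fun j hj => ?_⟩
        rw [Function.update_of_ne (by rintro rfl; exact hiT hj)]
        exact h1 j hj
      · rintro ⟨h1, h2⟩
        refine ⟨fun j hj => ?_, h1⟩
        have := h2 j hj
        rwa [Function.update_of_ne (by rintro rfl; exact hiT hj)] at this
    rw [hfib, Finset.sum_congr rfl (fun l _ => heach l), Finset.sum_const,
      Finset.card_univ, Fintype.card_fin, smul_eq_mul]
    obtain ⟨c, rfl⟩ := hdvd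
    have h1 : 0 < s i := by have := hs i; omega
    have h2 : 0 < ∏ j ∈ T, s j := Finset.prod_pos (fun j _ => by have := hs j; omega)
    have e1 : (s i * ∏ j ∈ T, s j) * c / (s i * ∏ j ∈ T, s j) = c :=
      Nat.mul_div_cancel_left _ (by positivity)
    have e2 : (s i * ∏ j ∈ T, s j) * c = (∏ j ∈ T, s j) * (s i * c) := by ring
    rw [e1, e2, Nat.mul_div_cancel_left _ h2]
  -- iterate
  have key : ∀ d, d ≤ t → hasStrength s E (t - d) := by
    intro d
    induction d with
    | zero => intro _; simpa using hE
    | succ d ih =>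
      intro hd
      have h1 := ih (by omega)
      have : t - d = (t - (d+1)) + 1 := by omega
      rw [this] at h1
      exact step _ (by omega) h1
  have := key (t - u) (by omega)
  rwa [Nat.sub_sub_self hu] at this

lemma sum_sq {N n : ℕ} {s : Fin n → ℕ} (E : Fin N → ∀ i, Fin (s i)) (U : Finset (Fin n)) :
    ∑ r, ((Finset.univ.filter fun r' => ∀ i : U, E r' i.1 = E r i.1).card : ℝ)
      = ∑ y : ∀ i : U, Fin (s i.1), (cellCount s E U y : ℝ) ^ 2 := by
  classical
  have h1 : ∀ r : Fin N,
      ((Finset.univ.filter fun r' => ∀ i : U, E r' i.1 = E r i.1).card : ℝ)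
        = (cellCount s E U (fun i : U => E r i.1) : ℝ) := fun r => rfl
  rw [Finset.sum_congr rfl (fun r _ => h1 r)]
  have hfw := Finset.sum_fiberwise (Finset.univ : Finset (Fin N))
      (fun r => (fun i : U => E r i.1))
      (fun r => (cellCount s E U (fun i : U => E r i.1) : ℝ))
  rw [← hfw]
  apply Finset.sum_congr rfl
  intro y _
  have h2 : ∀ r ∈ Finset.univ.filter (fun r : Fin N => (fun i : U => E r i.1) = y),
      (cellCount s E U (fun i : U => E r i.1) : ℝ) = (cellCount s E U y : ℝ) := by
    intro r hr
    rw [Finset.mem_filter] at hr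
    rw [hr.2]
  rw [Finset.sum_congr rfl h2, Finset.sum_const, nsmul_eq_mul, sq]
  congr 1
  unfold cellCount
  norm_cast
  congr 1
  apply Finset.filter_congr
  intro r _
  simp [funext_iff]

lemma lemA {N n R : ℕ} (hN : 1 ≤ N) (hR : 2 ≤ R) (hn : R ≤ n) {s : Fin n → ℕ}
    (hs : ∀ i, 2 ≤ s i) (C : ∀ i, Fin (s i) → Fin (s i - 1) → ℝ) (hC : ∀ i, isNOC (C i))
    {E : Fin N → ∀ i, Fin (s i)} (hE : hasStrength s E (R - 1))
    (U : Finset (Fin n)) (hU : U.card = R) :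
    (N : ℝ) ^ 2 * projFreq C E U
      = (∏ i ∈ U, (s i : ℝ)) * (∑ y : ∀ i : U, Fin (s i.1), (cellCount s E U y : ℝ) ^ 2)
        - (N : ℝ) ^ 2 := by
  classical
  have hN0 : (N : ℝ) ≠ 0 := Nat.cast_ne_zero.mpr (by omega)
  rw [projFreq, mul_comm, div_mul_cancel₀ _ (pow_ne_zero 2 hN0)]
  -- Step 1: square of sum as double sum, swap j inside
  have step1 : (∑ j : ∀ i : U, Fin (s i.1 - 1), (∑ r, intCol C E U j r) ^ 2)
      = ∑ r, ∑ r', ∑ j : ∀ i : U, Fin (s i.1 - 1), intCol C E U j r * intCol C E U j r' := by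
    calc (∑ j : ∀ i : U, Fin (s i.1 - 1), (∑ r, intCol C E U j r) ^ 2)
        = ∑ j : ∀ i : U, Fin (s i.1 - 1), ∑ r, ∑ r',
            intCol C E U j r * intCol C E U j r' := by
          apply Finset.sum_congr rfl; intro j _
          rw [sq, Finset.sum_mul_sum]
      _ = ∑ r, ∑ j : ∀ i : U, Fin (s i.1 - 1), ∑ r',
            intCol C E U j r * intCol C E U j r' := Finset.sum_comm
      _ = ∑ r, ∑ r', ∑ j : ∀ i : U, Fin (s i.1 - 1),
            intCol C E U j r * intCol C E U j r' := by
          apply Finset.sum_congr rfl; intro r _; exact Finset.sum_comm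
  rw [step1]
  -- Step 2: inner sum over j via row orthogonality
  have step2 : ∀ r r', (∑ j : ∀ i : U, Fin (s i.1 - 1),
      intCol C E U j r * intCol C E U j r')
      = ∏ i : U, ((if E r i.1 = E r' i.1 then (s i.1 : ℝ) else 0) - 1) := by
    intro r r'
    have h1 : ∀ j : ∀ i : U, Fin (s i.1 - 1), intCol C E U j r * intCol C E U j r'
        = ∏ i : U, (C i.1 (E r i.1) (j i) * C i.1 (E r' i.1) (j i)) := by
      intro j; rw [intCol, intCol, ← Finset.prod_mul_distrib]
    rw [Finset.sum_congr rfl (fun j _ => h1 j)]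
    have h2 := Finset.prod_univ_sum (fun i : U => (Finset.univ : Finset (Fin (s i.1 - 1))))
      (fun i b => C i.1 (E r i.1) b * C i.1 (E r' i.1) b)
    rw [Fintype.piFinset_univ] at h2
    rw [← h2]
    apply Finset.prod_congr rfl
    intro i _
    exact rowNOC (le_trans one_le_two (hs i.1)) (C i.1) (hC i.1) _ _
  rw [Finset.sum_congr rfl fun r _ => Finset.sum_congr rfl fun r' _ => step2 r r']
  -- Step 3: expand the product over subsets
  have step3 : ∀ r r' : Fin N,
      (∏ i : U, ((if E r i.1 = E r' i.1 then (s i.1 : ℝ) else 0) - 1))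
      = ∑ T ∈ (Finset.univ : Finset {x // x ∈ U}).powerset,
          (if ∀ i ∈ T, E r i.1 = E r' i.1 then ∏ i ∈ T, (s i.1 : ℝ) else 0)
            * (-1 : ℝ) ^ ((Finset.univ \ T).card) := by
    intro r r'
    have hpa := Finset.prod_add (fun i : {x // x ∈ U} => (if E r i.1 = E r' i.1 then (s i.1 : ℝ) else 0))
      (fun _ => (-1 : ℝ)) Finset.univ
    simp only [sub_eq_add_neg]
    rw [hpa]
    apply Finset.sum_congr rfl
    intro T _
    rw [Finset.prod_ite_zero, Finset.prod_const]
    simp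
  rw [Finset.sum_congr rfl fun r _ => Finset.sum_congr rfl fun r' _ => step3 r r']
  -- Step 4: swap the sum over T to the outside
  have step4 : (∑ r : Fin N, ∑ r' : Fin N, ∑ T ∈ (Finset.univ : Finset {x // x ∈ U}).powerset,
        (if ∀ i ∈ T, E r i.1 = E r' i.1 then ∏ i ∈ T, (s i.1 : ℝ) else 0)
          * (-1 : ℝ) ^ ((Finset.univ \ T).card))
      = ∑ T ∈ (Finset.univ : Finset {x // x ∈ U}).powerset, ∑ r : Fin N, ∑ r' : Fin N,
        (if ∀ i ∈ T, E r i.1 = E r' i.1 then ∏ i ∈ T, (s i.1 : ℝ) else 0)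
          * (-1 : ℝ) ^ ((Finset.univ \ T).card) := by
    calc (∑ r : Fin N, ∑ r' : Fin N, ∑ T ∈ (Finset.univ : Finset {x // x ∈ U}).powerset,
          (if ∀ i ∈ T, E r i.1 = E r' i.1 then ∏ i ∈ T, (s i.1 : ℝ) else 0)
            * (-1 : ℝ) ^ ((Finset.univ \ T).card))
        = ∑ r : Fin N, ∑ T ∈ (Finset.univ : Finset {x // x ∈ U}).powerset, ∑ r' : Fin N,
          (if ∀ i ∈ T, E r i.1 = E r' i.1 then ∏ i ∈ T, (s i.1 : ℝ) else 0)
            * (-1 : ℝ) ^ ((Finset.univ \ T).card) := by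
          apply Finset.sum_congr rfl; intro r _; exact Finset.sum_comm
      _ = ∑ T ∈ (Finset.univ : Finset {x // x ∈ U}).powerset, ∑ r : Fin N, ∑ r' : Fin N,
          (if ∀ i ∈ T, E r i.1 = E r' i.1 then ∏ i ∈ T, (s i.1 : ℝ) else 0)
            * (-1 : ℝ) ^ ((Finset.univ \ T).card) := Finset.sum_comm
  rw [step4]
  -- Step 5: evaluate the inner double sum for proper subsets via strength
  have step5 : ∀ T ∈ (Finset.univ : Finset {x // x ∈ U}).powerset, T ≠ Finset.univ →
      (∑ r : Fin N, ∑ r' : Fin N,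
        (if ∀ i ∈ T, E r i.1 = E r' i.1 then ∏ i ∈ T, (s i.1 : ℝ) else 0)
          * (-1 : ℝ) ^ ((Finset.univ \ T).card))
      = (N : ℝ) ^ 2 * (-1 : ℝ) ^ ((Finset.univ \ T).card) := by
    intro T _ hne
    have hTlt : T.card < R := by
      have h1 : T ⊂ Finset.univ := Finset.ssubset_univ_iff.mpr hne
      have h2 := Finset.card_lt_card h1
      rwa [Finset.card_univ, Fintype.card_coe, hU] at h2
    set T' : Finset (Fin n) := T.map (Function.Embedding.subtype _) with hT'
    have hT'card : T'.card = T.card := Finset.card_map _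
    have hstr : hasStrength s E T'.card :=
      strength_mono hs (by omega) hE (by omega)
    have hdvd : (∏ i ∈ T', s i) ∣ N := strength_dvd hs hstr T' rfl
    rw [Finset.prod_map] at hdvd
    simp only [Function.Embedding.coe_subtype] at hdvd
    have hcnt : ∀ r : Fin N,
        (Finset.univ.filter fun r' => ∀ i ∈ T, E r i.1 = E r' i.1).card
          = N / ∏ i ∈ T, s i.1 := by
      intro r
      have h3 := hstr T' rfl (E r)
      rw [Finset.prod_map] at h3
      simp only [Function.Embedding.coe_subtype] at h3
      rw [← h3]
      congr 1
      apply Finset.filter_congr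
      intro r' _
      simp only [hT', Finset.forall_mem_map, Function.Embedding.coe_subtype]
      exact ⟨fun h i hi => (h i hi).symm, fun h i hi => (h i hi).symm⟩
    obtain ⟨c, hc⟩ := hdvd
    have hP : 0 < ∏ i ∈ T, s i.1 :=
      Finset.prod_pos (fun i _ => by have := hs i.1; omega)
    have hNc : N / ∏ i ∈ T, s i.1 = c := by rw [hc]; exact Nat.mul_div_cancel_left _ hP
    have hinner : ∀ r : Fin N,
        (∑ r' : Fin N, (if ∀ i ∈ T, E r i.1 = E r' i.1 then ∏ i ∈ T, (s i.1 : ℝ) else 0))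
          = (N : ℝ) := by
      intro r
      rw [← Finset.sum_filter, Finset.sum_const, hcnt r, hNc, nsmul_eq_mul,
        ← Nat.cast_prod, ← Nat.cast_mul, mul_comm c, ← hc]
    calc (∑ r : Fin N, ∑ r' : Fin N,
          (if ∀ i ∈ T, E r i.1 = E r' i.1 then ∏ i ∈ T, (s i.1 : ℝ) else 0)
            * (-1 : ℝ) ^ ((Finset.univ \ T).card))
        = ∑ r : Fin N,
            (∑ r' : Fin N, (if ∀ i ∈ T, E r i.1 = E r' i.1 then ∏ i ∈ T, (s i.1 : ℝ) else 0))
              * (-1 : ℝ) ^ ((Finset.univ \ T).card) := by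
          apply Finset.sum_congr rfl; intro r _; rw [Finset.sum_mul]
      _ = ∑ r : Fin N, (N : ℝ) * (-1 : ℝ) ^ ((Finset.univ \ T).card) := by
          apply Finset.sum_congr rfl; intro r _; rw [hinner r]
      _ = (N : ℝ) ^ 2 * (-1 : ℝ) ^ ((Finset.univ \ T).card) := by
          rw [Finset.sum_const, Finset.card_univ, Fintype.card_fin, nsmul_eq_mul]; ring
  -- Step 6: the full-set term
  have step6 : (∑ r : Fin N, ∑ r' : Fin N,
        (if ∀ i ∈ (Finset.univ : Finset {x // x ∈ U}), E r i.1 = E r' i.1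
          then ∏ i ∈ (Finset.univ : Finset {x // x ∈ U}), (s i.1 : ℝ) else 0)
          * (-1 : ℝ) ^ ((Finset.univ \ (Finset.univ : Finset {x // x ∈ U})).card))
      = (∏ i ∈ U, (s i : ℝ)) * ∑ y : ∀ i : U, Fin (s i.1), (cellCount s E U y : ℝ) ^ 2 := by
    rw [← sum_sq E U]
    simp only [Finset.sdiff_self, Finset.card_empty, pow_zero]
    rw [Finset.mul_sum]
    apply Finset.sum_congr rfl
    intro r _
    simp only [mul_one]
    rw [← Finset.sum_filter]
    have hfeq : (Finset.univ.filter fun r' : Fin N =>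
        ∀ i ∈ (Finset.univ : Finset {x // x ∈ U}), E r i.1 = E r' i.1)
        = Finset.univ.filter fun r' : Fin N => ∀ i : U, E r' i.1 = E r i.1 := by
      apply Finset.filter_congr
      intro r' _
      constructor
      · intro h i
        exact (h i (Finset.mem_univ i)).symm
      · intro h i _
        exact (h i).symm
    have hps : (∏ i ∈ (Finset.univ : Finset {x // x ∈ U}), ((s i.1 : ℕ) : ℝ))
        = ∏ i ∈ U, ((s i : ℕ) : ℝ) := Finset.prod_coe_sort U (fun i => ((s i : ℕ) : ℝ))
    rw [hfeq, Finset.sum_const, nsmul_eq_mul, hps, mul_comm]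
  -- Step 7: assemble
  have huniv_mem : (Finset.univ : Finset {x // x ∈ U}) ∈
      (Finset.univ : Finset {x // x ∈ U}).powerset := Finset.mem_powerset_self _
  rw [← Finset.sum_erase_add _ _ huniv_mem, step6]
  have step7 : (∑ T ∈ ((Finset.univ : Finset {x // x ∈ U}).powerset).erase Finset.univ,
      ∑ r : Fin N, ∑ r' : Fin N,
        (if ∀ i ∈ T, E r i.1 = E r' i.1 then ∏ i ∈ T, (s i.1 : ℝ) else 0)
          * (-1 : ℝ) ^ ((Finset.univ \ T).card))
      = - (N : ℝ) ^ 2 := by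
    have hrw : ∀ T ∈ ((Finset.univ : Finset {x // x ∈ U}).powerset).erase Finset.univ,
        (∑ r : Fin N, ∑ r' : Fin N,
          (if ∀ i ∈ T, E r i.1 = E r' i.1 then ∏ i ∈ T, (s i.1 : ℝ) else 0)
            * (-1 : ℝ) ^ ((Finset.univ \ T).card))
        = (N : ℝ) ^ 2 * (-1 : ℝ) ^ ((Finset.univ \ T).card) := by
      intro T hT
      rw [Finset.mem_erase] at hT
      exact step5 T hT.2 hT.1
    rw [Finset.sum_congr rfl hrw, ← Finset.mul_sum]
    have hzero : (∑ T ∈ (Finset.univ : Finset {x // x ∈ U}).powerset,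
        (-1 : ℝ) ^ ((Finset.univ \ T).card)) = 0 := by
      have hpa := Finset.prod_add (fun _ : {x // x ∈ U} => (1 : ℝ))
        (fun _ => (-1 : ℝ)) Finset.univ
      simp only [Finset.prod_const, one_pow, one_mul] at hpa
      have hcard : (Finset.univ : Finset {x // x ∈ U}).card = R := by
        rw [Finset.card_univ, Fintype.card_coe, hU]
      rw [← hpa, hcard]
      have h0 : (1 + -1 : ℝ) = 0 := by ring
      rw [h0]
      exact zero_pow (by omega)
    have := Finset.sum_erase_add ((Finset.univ : Finset {x // x ∈ U}).powerset)
      (fun T => (-1 : ℝ) ^ ((Finset.univ \ T).card)) huniv_mem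
    rw [hzero] at this
    simp only [Finset.sdiff_self, Finset.card_empty, pow_zero] at this
    have h9 : (∑ T ∈ ((Finset.univ : Finset {x // x ∈ U}).powerset).erase Finset.univ,
        (-1 : ℝ) ^ ((Finset.univ \ T).card)) = -1 := by linarith
    rw [h9]; ring
  rw [step7]; ring

lemma ssq_compare {N n R : ℕ} (hN : 1 ≤ N) {s : Fin n → ℕ} (hs : ∀ i, 2 ≤ s i)
    {D D' : Fin N → ∀ i, Fin (s i)} (hD : weakStrength s D R)
    (U : Finset (Fin n)) (hU : U.card = R) :
    (∑ y : ∀ i : U, Fin (s i.1), (cellCount s D U y : ℝ) ^ 2)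
      ≤ ∑ y : ∀ i : U, Fin (s i.1), (cellCount s D' U y : ℝ) ^ 2 := by
  classical
  set q : ℕ := N / ∏ i ∈ U, s i with hq
  have hDy : ∀ y : ∀ i : U, Fin (s i.1),
      cellCount s D U y = q ∨ cellCount s D U y = q + 1 := by
    intro y
    rw [cellCount_eq hs]
    exact hD.2 U hU (extFun hs U y)
  have hpartD := cell_partition D U
  have hpartD' := cell_partition D' U
  have key1 : ∀ y : ∀ i : U, Fin (s i.1),
      (cellCount s D U y : ℝ) ^ 2
        = (2 * q + 1) * (cellCount s D U y : ℝ) - q * (q + 1) := by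
    intro y
    rcases hDy y with h | h <;> rw [h] <;> push_cast <;> ring
  have key2 : ∀ y : ∀ i : U, Fin (s i.1),
      (2 * q + 1) * (cellCount s D' U y : ℝ) - q * (q + 1)
        ≤ (cellCount s D' U y : ℝ) ^ 2 := by
    intro y
    set m := cellCount s D' U y
    rcases le_or_gt m q with h | h
    · have : (m : ℝ) ≤ q := by exact_mod_cast h
      nlinarith
    · have : (q : ℝ) + 1 ≤ m := by exact_mod_cast h
      nlinarith
  calc (∑ y : ∀ i : U, Fin (s i.1), (cellCount s D U y : ℝ) ^ 2)
      = ∑ y : ∀ i : U, Fin (s i.1),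
          ((2 * q + 1) * (cellCount s D U y : ℝ) - q * (q + 1)) :=
        Finset.sum_congr rfl fun y _ => key1 y
    _ = (2 * q + 1) * (N : ℝ)
          - (Fintype.card (∀ i : U, Fin (s i.1))) * (q * (q + 1)) := by
        rw [Finset.sum_sub_distrib, ← Finset.mul_sum, Finset.sum_const, Finset.card_univ,
          nsmul_eq_mul]
        congr 2
        rw [← Nat.cast_sum]
        exact_mod_cast congrArg (Nat.cast : ℕ → ℝ) hpartD
    _ = ∑ y : ∀ i : U, Fin (s i.1),
          ((2 * q + 1) * (cellCount s D' U y : ℝ) - q * (q + 1)) := by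
        rw [Finset.sum_sub_distrib, ← Finset.mul_sum, Finset.sum_const, Finset.card_univ,
          nsmul_eq_mul]
        congr 2
        rw [← Nat.cast_sum]
        exact_mod_cast (congrArg (Nat.cast : ℕ → ℝ) hpartD').symm
    _ ≤ ∑ y : ∀ i : U, Fin (s i.1), (cellCount s D' U y : ℝ) ^ 2 :=
        Finset.sum_le_sum fun y _ => key2 y

lemma projFreq_le {N n R : ℕ} (hN : 1 ≤ N) (hR : 2 ≤ R) (hn : R ≤ n) {s : Fin n → ℕ}
    (hs : ∀ i, 2 ≤ s i) (C : ∀ i, Fin (s i) → Fin (s i - 1) → ℝ) (hC : ∀ i, isNOC (C i))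
    {D D' : Fin N → ∀ i, Fin (s i)} (hD : weakStrength s D R)
    (hD' : hasStrength s D' (R - 1))
    (U : Finset (Fin n)) (hU : U.card = R) :
    projFreq C D U ≤ projFreq C D' U := by
  have hA := lemA hN hR hn hs C hC hD.1 U hU
  have hA' := lemA hN hR hn hs C hC hD' U hU
  have hK : (0 : ℝ) ≤ ∏ i ∈ U, (s i : ℝ) :=
    Finset.prod_nonneg fun i _ => by positivity
  have hssq := ssq_compare (D' := D') hN hs hD U hU
  have hN2 : (0 : ℝ) < (N : ℝ) ^ 2 := by
    have : (0 : ℝ) < N := by exact_mod_cast hN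
    positivity
  have h1 : (N : ℝ) ^ 2 * projFreq C D U ≤ (N : ℝ) ^ 2 * projFreq C D' U := by
    rw [hA, hA']
    have := mul_le_mul_of_nonneg_left hssq hK
    linarith
  exact le_of_mul_le_mul_left h1 hN2

/-- if no design with the given parameters has strength `R`, then a design
of weak strength `R` maximizes `GR` among all designs of these parameters of
strength `R-1`. -/
theorem statement9 {N n R : ℕ} (hN : 1 ≤ N) (hR : 2 ≤ R) (hn : R ≤ n)
    {s : Fin n → ℕ} (hs : ∀ i, 2 ≤ s i)
    (C : ∀ i, Fin (s i) → Fin (s i - 1) → ℝ) (hC : ∀ i, isNOC (C i))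
    (hnoR : ∀ D : Fin N → ∀ i, Fin (s i), ¬ hasStrength s D R)
    (D : Fin N → ∀ i, Fin (s i)) (hD : weakStrength s D R)
    (D' : Fin N → ∀ i, Fin (s i)) (hD' : hasStrength s D' (R - 1)) :
    GR R C D' ≤ GR R C D := by
  classical
  unfold GR
  apply sub_le_sub_left
  apply Real.sqrt_le_sqrt
  -- sup for D is at most sup for D'
  set f : (Fin N → ∀ i, Fin (s i)) → Finset (Fin n) → ℝ := fun E U =>
    projFreq C E U / (((sInf (s '' (U : Set (Fin n))) : ℕ) : ℝ) - 1) with hf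
  have hfin : ∀ E, BddAbove {v : ℝ | ∃ U : Finset (Fin n), U.card = R ∧ v = f E U} := by
    intro E
    apply Set.Finite.bddAbove
    apply Set.Finite.subset (Set.Finite.image (f E) (Set.toFinite
      {U : Finset (Fin n) | U.card = R}))
    rintro v ⟨U, hU, rfl⟩
    exact ⟨U, hU, rfl⟩
  have hne : ∀ E, {v : ℝ | ∃ U : Finset (Fin n), U.card = R ∧ v = f E U}.Nonempty := by
    intro E
    obtain ⟨U, -, hU⟩ := Finset.exists_subset_card_eq
      (show R ≤ (Finset.univ : Finset (Fin n)).card by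
        rw [Finset.card_univ, Fintype.card_fin]; exact hn)
    exact ⟨f E U, U, hU, rfl⟩
  apply csSup_le (hne D)
  rintro v ⟨U, hU, rfl⟩
  have hUne : U.Nonempty := Finset.card_pos.mp (by omega)
  have hinf : sInf (s '' (U : Set (Fin n))) ∈ s '' (U : Set (Fin n)) :=
    Nat.sInf_mem ⟨s hUne.choose, hUne.choose, by simpa using hUne.choose_spec, rfl⟩
  obtain ⟨i₀, -, hi₀⟩ := hinf
  have hd : (0 : ℝ) < ((sInf (s '' (U : Set (Fin n))) : ℕ) : ℝ) - 1 := by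
    rw [← hi₀]
    have := hs i₀
    have : (2 : ℝ) ≤ (s i₀ : ℝ) := by exact_mod_cast this
    linarith
  have hle : f D U ≤ f D' U := by
    rw [hf]
    have hpf := projFreq_le hN hR hn hs C hC hD hD' U hU
    dsimp only
    gcongr
  refine le_trans hle (le_csSup (hfin D') ⟨U, hU, rfl⟩)
end

section
/- Fix N, n ≥ R ≥ 2 and a common level size s ≥ 2 (s i = s for all i), and fix normalized orthogonal codings. Suppose that no design with these parameters has strength R, and let D be a design with these parameters of strength R−1. Then GR(D) ≤ R + 1 − sqrt( r(s^R − r) / (N²(s − 1)) ), where r = N mod s^R, with equality if and only if D has weak strength R. -/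
/-!
Expanding the squared column sums of the interaction matrix `X_U` with the orthogonality of
the codings gives `N² a_R(U) = ∑_{r,r'} ∏_{i∈U} (s [D r i = D r' i] - 1)`. Multiplying out the
product over the subsets `T ⊆ U`, strength `R - 1` makes every proper `T` contribute
`(-1)^|U \ T| N²`, and the alternating signs leave `N² a_R(U) = s^R ∑_z n_z² - N²`, where
`n_z` counts the runs showing the level combination `z` on `U`. For counts with `∑ n_z = N = q s^R + r` over
`s^R` cells, `s^R ∑ n_z² - N² = r (s^R - r) + s^R ∑ (n_z - q)(n_z - q - 1)`, and every summand
of the last sum is a nonnegative integer vanishing exactly when `n_z ∈ {q, q + 1}`. As `GR`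
decreases in `max_U a_R(U)`, this is the bound, attained exactly when every `U` attains it,
i.e. when `D` has weak strength `R`.
-/

open Finset Matrix

theorem isNOC.sum_mul_eq {m : ℕ} [NeZero m] {C : Fin m → Fin (m - 1) → ℝ} (hC : isNOC C)
    (a b : Fin m) : ∑ j, C a j * C b j = (if a = b then (m : ℝ) else 0) - 1 := by
  -- Adjoining the constant column makes `C` a square matrix `A` with `Aᵀ * A = m • 1`,
  -- so also `A * Aᵀ = m • 1`.
  let A : Matrix (Fin m) (Option (Fin (m - 1))) ℝ := Matrix.of fun l => Option.elim' 1 (C l)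
  have hAtA : ((m : ℝ)⁻¹ • Aᵀ) * A = 1 := by
    ext (_ | j) (_ | j') <;>
      simp [A, Matrix.mul_apply, Matrix.one_apply, mul_assoc, ← Finset.mul_sum, hC.1, hC.2,
        NeZero.ne, apply_ite]
  have e : Option (Fin (m - 1)) ≃ Fin m :=
    Fintype.equivOfCardEq (by simp [Nat.sub_add_cancel NeZero.one_le])
  have hAAt : A * Aᵀ = (m : ℝ) • 1 := by
    rw [← (Matrix.mul_eq_one_comm_of_equiv e).1 hAtA, Matrix.mul_smul, smul_smul,
      mul_inv_cancel₀ (NeZero.ne _), one_smul]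
  have hab := congr_fun₂ hAAt a b
  simp only [Matrix.mul_apply, Matrix.transpose_apply, Fintype.sum_option, A, Matrix.of_apply,
    Option.elim', mul_one, Matrix.smul_apply, Matrix.one_apply, smul_eq_mul, mul_ite,
    mul_zero] at hab
  linarith

theorem prod_ite_sub_one_eq_sum_powerset {R ι : Type*} [CommRing R] [DecidableEq ι]
    (U : Finset ι) (p : ι → Prop) [DecidablePred p] (a : ι → R) :
    ∏ i ∈ U, ((if p i then a i else 0) - 1) =
      ∑ T ∈ U.powerset,
        (∏ i ∈ T, a i) * (if ∀ i ∈ T, p i then 1 else 0) * ∏ _i ∈ U \ T, (-1 : R) := by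
  have h : ∀ i, (if p i then a i else 0) = a i * if p i then 1 else 0 :=
    fun i => (mul_boole ..).symm
  simp_rw [h, sub_eq_add_neg, Finset.prod_add, Finset.prod_mul_distrib, Finset.prod_boole]

theorem sum_powerset_prod_sdiff_neg_one {R ι : Type*} [CommRing R] [DecidableEq ι]
    {U : Finset ι} (hU : U.Nonempty) : ∑ T ∈ U.powerset, ∏ _i ∈ U \ T, (-1 : R) = 0 := by
  have h := (Finset.prod_add (fun _ => (1 : R)) (fun _ => -1) U).symm
  simpa [Finset.card_ne_zero.2 hU] using h

section SumOfSquares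

variable {ι : Type*} [Fintype ι]

theorem card_mul_sum_sq_eq (c : ι → ℤ) (q r : ℤ) (h : ∑ i, c i = Fintype.card ι * q + r) :
    Fintype.card ι * ∑ i, c i ^ 2 = (∑ i, c i) ^ 2 + r * (Fintype.card ι - r) +
      Fintype.card ι * ∑ i, (c i - q) * (c i - q - 1) := by
  have hterm i : (c i - q) * (c i - q - 1) = c i ^ 2 - (2 * q + 1) * c i + (q ^ 2 + q) := by ring
  simp only [hterm, Finset.sum_add_distrib, Finset.sum_sub_distrib, ← Finset.mul_sum,
    Finset.sum_const, Finset.card_univ, nsmul_eq_mul, h]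
  ring

theorem Int.mul_sub_one_nonneg (a : ℤ) : 0 ≤ a * (a - 1) := by
  rcases le_or_gt a 0 with h | h <;> nlinarith

theorem sq_sum_add_mul_sub_le_card_mul_sum_sq (c : ι → ℤ) {q r : ℤ}
    (h : ∑ i, c i = Fintype.card ι * q + r) :
    (∑ i, c i) ^ 2 + r * (Fintype.card ι - r) ≤ Fintype.card ι * ∑ i, c i ^ 2 := by
  rw [card_mul_sum_sq_eq c q r h, le_add_iff_nonneg_right]
  exact mul_nonneg (Nat.cast_nonneg _) (Finset.sum_nonneg fun i _ => Int.mul_sub_one_nonneg _)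

theorem sq_sum_add_mul_sub_eq_card_mul_sum_sq_iff [Nonempty ι] (c : ι → ℤ) {q r : ℤ}
    (h : ∑ i, c i = Fintype.card ι * q + r) :
    (∑ i, c i) ^ 2 + r * (Fintype.card ι - r) = Fintype.card ι * ∑ i, c i ^ 2 ↔
      ∀ i, c i = q ∨ c i = q + 1 := by
  rw [card_mul_sum_sq_eq c q r h, left_eq_add, mul_eq_zero,
    Finset.sum_eq_zero_iff_of_nonneg fun i _ => Int.mul_sub_one_nonneg _]
  simp only [Nat.cast_eq_zero, Fintype.card_ne_zero, false_or, Finset.mem_univ, true_implies,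
    mul_eq_zero, sub_eq_zero, sub_sub, eq_comm (b := q + 1)]

end SumOfSquares

theorem Set.finite_setOf_exists_and_eq {α β : Type*} [Finite α] (p : α → Prop) (f : α → β) :
    {b | ∃ a, p a ∧ b = f a}.Finite :=
  (Set.finite_range f).subset fun _ ⟨a, _, hb⟩ => ⟨a, hb.symm⟩

theorem Finset.restrict_surjective {ι : Type*} {π : ι → Type*} [∀ i, Nonempty (π i)]
    (T : Finset ι) : Function.Surjective (T.restrict (π := π)) := fun z => by
  classical
  exact ⟨fun i => if h : i ∈ T then z ⟨i, h⟩ else Classical.arbitrary _, by ext i; simp⟩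

section Counting

variable {N n : ℕ} {s : Fin n → ℕ} (D : Fin N → ∀ i, Fin (s i))

def levelCount (T : Finset (Fin n)) (z : ∀ i : T, Fin (s i)) : ℕ :=
  #{r | T.restrict (D r) = z}

theorem card_filter_forall_mem_eq_levelCount (T : Finset (Fin n)) (x : ∀ i, Fin (s i)) :
    #{r | ∀ i ∈ T, D r i = x i} = levelCount D T (T.restrict x) := by
  simp only [levelCount, funext_iff, Finset.restrict, Subtype.forall]

theorem forall_card_filter_iff_forall_levelCount [∀ i, NeZero (s i)] (T : Finset (Fin n))
    (P : ℕ → Prop) :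
    (∀ x : ∀ i, Fin (s i), P #{r | ∀ i ∈ T, D r i = x i}) ↔ ∀ z, P (levelCount D T z) := by
  simp only [card_filter_forall_mem_eq_levelCount]
  exact ((Finset.restrict_surjective (π := fun i => Fin (s i)) T).forall
    (p := fun z => P (levelCount D T z))).symm

theorem card_pi_fin (T : Finset (Fin n)) : Fintype.card (∀ i : T, Fin (s i)) = ∏ i ∈ T, s i := by
  simp [Fintype.card_pi, Finset.prod_attach T s]

theorem sum_levelCount (T : Finset (Fin n)) : ∑ z, levelCount D T z = N := by
  simp only [levelCount]
  rw [← Finset.card_eq_sum_card_fiberwise (fun _ _ => Finset.mem_coe.2 (Finset.mem_univ _)),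
    Finset.card_univ, Fintype.card_fin]

theorem sum_card_filter_eq_sum_sq_levelCount (T : Finset (Fin n)) :
    ∑ r, #{r' | ∀ i ∈ T, D r' i = D r i} = ∑ z, levelCount D T z ^ 2 := by
  simp only [card_filter_forall_mem_eq_levelCount]
  rw [← Finset.sum_fiberwise Finset.univ (fun r => T.restrict (D r))]
  refine Finset.sum_congr rfl fun z _ => ?_
  rw [Finset.sum_congr rfl fun r hr => congrArg (levelCount D T) (Finset.mem_filter.1 hr).2,
    Finset.sum_const, smul_eq_mul, sq, levelCount]

theorem sum_levelCount_eq_card_mul_div_add_mod (T : Finset (Fin n)) :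
    ∑ z, (levelCount D T z : ℤ) =
      Fintype.card (∀ i : T, Fin (s i)) * (N / ∏ i ∈ T, s i : ℕ) + (N % ∏ i ∈ T, s i : ℕ) := by
  rw [card_pi_fin]
  exact_mod_cast (sum_levelCount D T).trans (Nat.div_add_mod _ _).symm

theorem sum_sum_boole_eq_sum_sq_levelCount (T : Finset (Fin n)) :
    ∑ r, ∑ r', (if ∀ i ∈ T, D r i = D r' i then (1 : ℝ) else 0) =
      ∑ z, (levelCount D T z : ℝ) ^ 2 := by
  calc ∑ r, ∑ r', (if ∀ i ∈ T, D r i = D r' i then (1 : ℝ) else 0)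
      = ∑ r, (#{r' | ∀ i ∈ T, D r' i = D r i} : ℝ) := by
        refine Finset.sum_congr rfl fun r _ => ?_
        rw [Finset.sum_boole]
        simp only [eq_comm]
    _ = ∑ z, (levelCount D T z : ℝ) ^ 2 := by
        exact_mod_cast sum_card_filter_eq_sum_sq_levelCount D T

theorem card_filter_eq_sum_update {T : Finset (Fin n)} {k : Fin n} (hk : k ∉ T)
    (x : ∀ i, Fin (s i)) :
    #{r | ∀ i ∈ T, D r i = x i} =
      ∑ a : Fin (s k), #{r | ∀ i ∈ insert k T, D r i = Function.update x k a i} := by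
  rw [Finset.card_eq_sum_card_fiberwise (f := fun r => D r k) (t := Finset.univ)
    (fun _ _ => Finset.mem_coe.2 (Finset.mem_univ _))]
  simp only [Finset.filter_filter]
  refine Finset.sum_congr rfl fun a _ => congrArg Finset.card (Finset.filter_congr fun r _ => ?_)
  simp only [Finset.forall_mem_insert, Function.update_self]
  rw [and_comm]
  refine and_congr_right fun _ => forall₂_congr fun i hi => ?_
  rw [Function.update_of_ne (ne_of_mem_of_not_mem hi hk)]

end Counting

section Strength

variable {N n : ℕ} {s : Fin n → ℕ} {D : Fin N → ∀ i, Fin (s i)} {t : ℕ} {T : Finset (Fin n)}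

theorem hasStrength.levelCount_eq [∀ i, NeZero (s i)] (h : hasStrength s D t) (hT : #T = t)
    (z : ∀ i : T, Fin (s i)) : levelCount D T z = N / ∏ i ∈ T, s i :=
  (forall_card_filter_iff_forall_levelCount D T (· = N / ∏ i ∈ T, s i)).1 (h T hT) z

theorem hasStrength.prod_mul_div_eq [∀ i, NeZero (s i)] (h : hasStrength s D t) (hT : #T = t) :
    (∏ i ∈ T, s i) * (N / ∏ i ∈ T, s i) = N := by
  have hsum := sum_levelCount D T
  rwa [Finset.sum_congr rfl fun z _ => h.levelCount_eq hT z, Finset.sum_const, Finset.card_univ,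
    card_pi_fin, smul_eq_mul] at hsum

theorem hasStrength.prod_mul_sum_sq_levelCount [∀ i, NeZero (s i)] (h : hasStrength s D #T) :
    (∏ i ∈ T, s i) * ∑ z, levelCount D T z ^ 2 = N ^ 2 := by
  rw [Finset.sum_congr rfl fun z _ => by rw [h.levelCount_eq rfl z], Finset.sum_const,
    Finset.card_univ, card_pi_fin, smul_eq_mul, ← mul_assoc, ← sq, ← mul_pow, h.prod_mul_div_eq rfl]

theorem hasStrength.of_succ [∀ i, NeZero (s i)] (h : hasStrength s D (t + 1)) (ht : t < n) :
    hasStrength s D t := by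
  intro T hT x
  obtain ⟨k, -, hk⟩ := Finset.exists_mem_notMem_of_card_lt_card
    (s := T) (t := Finset.univ) (by simpa [hT] using ht)
  have hkT : #(insert k T) = t + 1 := by rw [Finset.card_insert_of_notMem hk, hT]
  have hdvd : s k * ∏ i ∈ T, s i ∣ N := by
    rw [← Finset.prod_insert hk]; exact ⟨_, (h.prod_mul_div_eq hkT).symm⟩
  rw [card_filter_eq_sum_update D hk, Finset.sum_congr rfl fun a _ => h _ hkT _,
    Finset.sum_const, Finset.card_univ, Fintype.card_fin, smul_eq_mul, Finset.prod_insert hk,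
    ← Nat.mul_div_assoc _ hdvd, Nat.mul_div_mul_left _ _ (Nat.pos_of_neZero (s k))]

theorem hasStrength.mono [∀ i, NeZero (s i)] (h : hasStrength s D t) (ht : t ≤ n) {t' : ℕ}
    (ht' : t' ≤ t) : hasStrength s D t' :=
  Nat.decreasingInduction (motive := fun u _ => hasStrength s D u)
    (fun u hu hsucc => hsucc.of_succ (by omega)) h ht'

end Strength

section ModelMatrix

variable {N n : ℕ} {s : Fin n → ℕ} [∀ i, NeZero (s i)] {C : ∀ i, Fin (s i) → Fin (s i - 1) → ℝ}
  {D : Fin N → ∀ i, Fin (s i)} {U : Finset (Fin n)}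

theorem sum_sq_sum_intCol_eq_sum_sum_prod (hC : ∀ i, isNOC (C i)) :
    ∑ j, (∑ r, intCol C D U j r) ^ 2 =
      ∑ r, ∑ r', ∏ i ∈ U, ((if D r i = D r' i then (s i : ℝ) else 0) - 1) := by
  calc ∑ j, (∑ r, intCol C D U j r) ^ 2
      = ∑ r, ∑ r', ∑ j : ∀ i : U, Fin (s i - 1),
          ∏ i : U, C i (D r i) (j i) * C i (D r' i) (j i) := by
        simp only [sq, Finset.sum_mul_sum, intCol, ← Finset.prod_mul_distrib]
        rw [Finset.sum_comm]
        exact Finset.sum_congr rfl fun _ _ => Finset.sum_comm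
    _ = _ := by
        refine Finset.sum_congr rfl fun r _ => Finset.sum_congr rfl fun r' _ => ?_
        rw [← Finset.prod_coe_sort U,
          ← Fintype.prod_sum fun (i : U) l => C i (D r i) l * C i (D r' i) l]
        exact Finset.prod_congr rfl fun i _ => (hC i).sum_mul_eq _ _

theorem sum_sq_sum_intCol_eq (hC : ∀ i, isNOC (C i)) (hD : hasStrength s D (#U - 1))
    (hU : U.Nonempty) :
    ∑ j, (∑ r, intCol C D U j r) ^ 2 =
      (∏ i ∈ U, s i : ℕ) * ∑ z, (levelCount D U z : ℝ) ^ 2 - N ^ 2 := by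
  set F : Finset (Fin n) → ℝ := fun T => (∏ i ∈ T, s i : ℕ) * ∑ z, (levelCount D T z : ℝ) ^ 2
  have hF : ∀ T ∈ U.powerset.erase U, F T = N ^ 2 := by
    intro T hT
    obtain ⟨hTU, hTsub⟩ := Finset.mem_erase.1 hT
    have hlt : #T < #U :=
      Finset.card_lt_card (Finset.ssubset_iff_subset_ne.2 ⟨Finset.mem_powerset.1 hTsub, hTU⟩)
    have hUn : #U ≤ n := by simpa using U.card_le_univ
    have hT : hasStrength s D #T := hD.mono (by omega) (by omega)
    simp only [F]
    exact_mod_cast hT.prod_mul_sum_sq_levelCount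
  calc ∑ j, (∑ r, intCol C D U j r) ^ 2
      = ∑ r, ∑ r', ∑ T ∈ U.powerset, (∏ i ∈ T, (s i : ℝ)) *
          (if ∀ i ∈ T, D r i = D r' i then 1 else 0) * ∏ _i ∈ U \ T, (-1 : ℝ) := by
        simp_rw [sum_sq_sum_intCol_eq_sum_sum_prod hC, prod_ite_sub_one_eq_sum_powerset]
        -- the two sides differ only in the `Decidable` instance of the indicator
        congr!
    _ = ∑ T ∈ U.powerset, F T * ∏ _i ∈ U \ T, (-1 : ℝ) := by
        rw [Finset.sum_congr rfl fun r _ => Finset.sum_comm, Finset.sum_comm]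
        refine Finset.sum_congr rfl fun T _ => ?_
        simp only [← Finset.sum_mul, ← Finset.mul_sum, F, sum_sum_boole_eq_sum_sq_levelCount,
          Nat.cast_prod]
    _ = F U - N ^ 2 := by
        rw [← Finset.add_sum_erase _ _ (Finset.mem_powerset_self U), Finset.sum_congr rfl
          fun T hT => by rw [hF T hT], ← Finset.mul_sum,
          Finset.sum_erase_eq_sub (Finset.mem_powerset_self U), sum_powerset_prod_sdiff_neg_one hU,
          Finset.sdiff_self, Finset.prod_empty]
        ring

theorem mod_mul_le_sum_sq_sum_intCol (hC : ∀ i, isNOC (C i)) (hD : hasStrength s D (#U - 1))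
    (hU : U.Nonempty) :
    (N % ∏ i ∈ U, s i : ℕ) * ((∏ i ∈ U, s i : ℕ) - (N % ∏ i ∈ U, s i : ℕ) : ℝ) ≤
      ∑ j, (∑ r, intCol C D U j r) ^ 2 := by
  have h := sq_sum_add_mul_sub_le_card_mul_sum_sq _ (sum_levelCount_eq_card_mul_div_add_mod D U)
  rw [card_pi_fin, ← @Int.cast_le ℝ] at h
  rw [sum_sq_sum_intCol_eq hC hD hU]
  set m := ∏ i ∈ U, s i
  set r := N % m
  have hN : ∑ z, (levelCount D U z : ℝ) = N := by exact_mod_cast sum_levelCount D U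
  push_cast [hN] at h
  linarith

theorem sum_sq_sum_intCol_eq_mod_mul_iff (hC : ∀ i, isNOC (C i)) (hD : hasStrength s D (#U - 1))
    (hU : U.Nonempty) :
    ∑ j, (∑ r, intCol C D U j r) ^ 2 =
        (N % ∏ i ∈ U, s i : ℕ) * ((∏ i ∈ U, s i : ℕ) - (N % ∏ i ∈ U, s i : ℕ) : ℝ) ↔
      ∀ z, levelCount D U z = N / ∏ i ∈ U, s i ∨ levelCount D U z = N / ∏ i ∈ U, s i + 1 := by
  have h := sq_sum_add_mul_sub_eq_card_mul_sum_sq_iff _ (sum_levelCount_eq_card_mul_div_add_mod D U)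
  rw [card_pi_fin, ← @Int.cast_inj ℝ] at h
  rw [sum_sq_sum_intCol_eq hC hD hU]
  set m := ∏ i ∈ U, s i
  set q := N / m
  set r := N % m
  have hN : ∑ z, (levelCount D U z : ℝ) = N := by exact_mod_cast sum_levelCount D U
  push_cast [hN] at h
  simp only [← Nat.cast_inj (R := ℤ), Nat.cast_add, Nat.cast_one, ← h]
  constructor <;> intro h <;> linarith

end ModelMatrix

section GeneralizedResolution
variable {N n : ℕ} {s : Fin n → ℕ} {R : ℕ} {C : ∀ i, Fin (s i) → Fin (s i - 1) → ℝ}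
  {D : Fin N → ∀ i, Fin (s i)} {B : ℝ}

theorem GR_le_sub_sqrt (hR : R ≤ n)
    (h : ∀ U : Finset (Fin n), #U = R →
      B ≤ projFreq C D U / (((sInf (s '' (U : Set (Fin n))) : ℕ) : ℝ) - 1)) :
    GR R C D ≤ R + 1 - Real.sqrt B := by
  obtain ⟨U, -, hU⟩ := Finset.exists_subset_card_eq (s := (Finset.univ : Finset (Fin n)))
    (by simpa using hR)
  have hfin := Set.finite_setOf_exists_and_eq (fun U : Finset (Fin n) => #U = R)
    fun U => projFreq C D U / (((sInf (s '' (U : Set (Fin n))) : ℕ) : ℝ) - 1)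
  exact sub_le_sub_left
    (Real.sqrt_le_sqrt ((h U hU).trans (le_csSup hfin.bddAbove ⟨U, hU, rfl⟩))) _

theorem GR_eq_sub_sqrt_iff (hR : R ≤ n) (hB : 0 ≤ B)
    (h : ∀ U : Finset (Fin n), #U = R →
      B ≤ projFreq C D U / (((sInf (s '' (U : Set (Fin n))) : ℕ) : ℝ) - 1)) :
    GR R C D = R + 1 - Real.sqrt B ↔ ∀ U : Finset (Fin n), #U = R →
      projFreq C D U / (((sInf (s '' (U : Set (Fin n))) : ℕ) : ℝ) - 1) = B := by
  obtain ⟨U, -, hU⟩ := Finset.exists_subset_card_eq (s := (Finset.univ : Finset (Fin n)))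
    (by simpa using hR)
  have hfin := Set.finite_setOf_exists_and_eq (fun U : Finset (Fin n) => #U = R)
    fun U => projFreq C D U / (((sInf (s '' (U : Set (Fin n))) : ℕ) : ℝ) - 1)
  have hle := le_csSup hfin.bddAbove ⟨U, hU, rfl⟩
  rw [GR, sub_right_inj, Real.sqrt_inj ((hB.trans (h U hU)).trans hle) hB]
  constructor
  · intro hsup V hV
    exact le_antisymm (hsup ▸ le_csSup hfin.bddAbove ⟨V, hV, rfl⟩) (h V hV)
  · intro hall
    obtain ⟨V, hV, hsup⟩ := Set.Nonempty.csSup_mem (by exact ⟨_, U, hU, rfl⟩) hfin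
    rw [hsup, hall V hV]

end GeneralizedResolution

section Symmetric

variable {N n R sl : ℕ} {C : Fin n → Fin sl → Fin (sl - 1) → ℝ}
  {D : Fin N → ∀ _ : Fin n, Fin sl} {U : Finset (Fin n)}

theorem projFreq_div_sInf_sub_one_eq (hU : U.Nonempty) :
    projFreq (s := fun _ => sl) C D U /
        (((sInf ((fun _ => sl) '' (U : Set (Fin n))) : ℕ) : ℝ) - 1) =
      (∑ j, (∑ r, intCol (s := fun _ => sl) C D U j r) ^ 2) / ((N : ℝ) ^ 2 * ((sl : ℝ) - 1)) := by
  rw [(Finset.coe_nonempty.2 hU).image_const, csInf_singleton, projFreq, div_div]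

theorem mod_mul_div_le_projFreq_div_sInf_sub_one [NeZero sl] (hC : ∀ i, isNOC (C i))
    (hD : hasStrength (fun _ => sl) D (R - 1)) (hR : 0 < R) (hU : #U = R) :
    ((N % sl ^ R : ℕ) : ℝ) * ((sl : ℝ) ^ R - ((N % sl ^ R : ℕ) : ℝ)) /
        ((N : ℝ) ^ 2 * ((sl : ℝ) - 1)) ≤
      projFreq (s := fun _ => sl) C D U /
        (((sInf ((fun _ => sl) '' (U : Set (Fin n))) : ℕ) : ℝ) - 1) := by
  subst hU
  have hU := Finset.card_pos.1 hR
  have h := mod_mul_le_sum_sq_sum_intCol hC hD hU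
  rw [Finset.prod_const, Nat.cast_pow] at h
  rw [projFreq_div_sInf_sub_one_eq hU]
  have : (1 : ℝ) ≤ sl := by exact_mod_cast NeZero.one_le
  exact div_le_div_of_nonneg_right h (mul_nonneg (sq_nonneg _) (by linarith))

theorem projFreq_div_sInf_sub_one_eq_iff [NeZero sl] (hN : N ≠ 0) (hsl : sl ≠ 1)
    (hC : ∀ i, isNOC (C i)) (hD : hasStrength (fun _ => sl) D (R - 1)) (hR : 0 < R)
    (hU : #U = R) :
    projFreq (s := fun _ => sl) C D U /
        (((sInf ((fun _ => sl) '' (U : Set (Fin n))) : ℕ) : ℝ) - 1) =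
        ((N % sl ^ R : ℕ) : ℝ) * ((sl : ℝ) ^ R - ((N % sl ^ R : ℕ) : ℝ)) /
          ((N : ℝ) ^ 2 * ((sl : ℝ) - 1)) ↔
      ∀ z, levelCount D U z = N / sl ^ R ∨ levelCount D U z = N / sl ^ R + 1 := by
  subst hU
  have hU := Finset.card_pos.1 hR
  have hK : (N : ℝ) ^ 2 * ((sl : ℝ) - 1) ≠ 0 :=
    mul_ne_zero (by positivity) (sub_ne_zero.2 (by exact_mod_cast hsl))
  rw [projFreq_div_sInf_sub_one_eq hU, div_left_inj' hK, ← Finset.prod_const, ← Nat.cast_pow,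
    ← Finset.prod_const]
  exact sum_sq_sum_intCol_eq_mod_mul_iff hC hD hU

end Symmetric

theorem statement10_general {N n R sl : ℕ} (hN : 1 ≤ N) (hR : 2 ≤ R) (hn : R ≤ n) (hsl : 2 ≤ sl)
    (C : ∀ i : Fin n, Fin sl → Fin (sl - 1) → ℝ) (hC : ∀ i, isNOC (C i))
    (D : Fin N → ∀ _ : Fin n, Fin sl) (hD : hasStrength (fun _ => sl) D (R - 1)) :
    GR (s := fun _ => sl) R C D ≤
        (R : ℝ) + 1 - Real.sqrt (((N % sl ^ R : ℕ) : ℝ) * ((sl : ℝ) ^ R - ((N % sl ^ R : ℕ) : ℝ)) /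
          ((N : ℝ) ^ 2 * ((sl : ℝ) - 1))) ∧
      (GR (s := fun _ => sl) R C D =
          (R : ℝ) + 1 - Real.sqrt (((N % sl ^ R : ℕ) : ℝ) * ((sl : ℝ) ^ R - ((N % sl ^ R : ℕ) : ℝ)) /
            ((N : ℝ) ^ 2 * ((sl : ℝ) - 1))) ↔
        weakStrength (fun _ => sl) D R) := by
  have : NeZero sl := ⟨by omega⟩
  have hle U := mod_mul_div_le_projFreq_div_sInf_sub_one (U := U) hC hD (by omega)
  have hB : 0 ≤ ((N % sl ^ R : ℕ) : ℝ) * ((sl : ℝ) ^ R - ((N % sl ^ R : ℕ) : ℝ)) /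
      ((N : ℝ) ^ 2 * ((sl : ℝ) - 1)) := by
    have : ((N % sl ^ R : ℕ) : ℝ) ≤ (sl : ℝ) ^ R := by
      exact_mod_cast (Nat.mod_lt _ (by positivity)).le
    have : (2 : ℝ) ≤ sl := by exact_mod_cast hsl
    exact div_nonneg (mul_nonneg (Nat.cast_nonneg _) (by linarith))
      (mul_nonneg (sq_nonneg _) (by linarith))
  refine ⟨GR_le_sub_sqrt hn hle, ?_⟩
  rw [GR_eq_sub_sqrt_iff hn hB hle, weakStrength, and_iff_right hD]
  refine forall₂_congr fun U hU => ?_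
  rw [projFreq_div_sInf_sub_one_eq_iff (by omega) (by omega) hC hD (by omega) hU,
    forall_card_filter_iff_forall_levelCount D U (fun c => c = _ ∨ c = _ + 1), Finset.prod_const,
    hU]

/-- for symmetric `s`-level designs, if no strength `R` design with these
parameters exists, then
`GR(D) ≤ R + 1 - sqrt(r(s^R - r)/(N²(s - 1)))` with `r = N mod s^R`, and equality
holds iff `D` has weak strength `R`. -/
theorem statement10 {N n R sl : ℕ} (hN : 1 ≤ N) (hR : 2 ≤ R) (hn : R ≤ n) (hsl : 2 ≤ sl)
    (C : ∀ i : Fin n, Fin sl → Fin (sl - 1) → ℝ) (hC : ∀ i, isNOC (C i))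
    (hnoR : ∀ D : Fin N → ∀ _ : Fin n, Fin sl, ¬ hasStrength (fun _ => sl) D R)
    (D : Fin N → ∀ _ : Fin n, Fin sl) (hD : hasStrength (fun _ => sl) D (R - 1)) :
    GR (s := fun _ => sl) R C D ≤
        (R : ℝ) + 1 - Real.sqrt (((N % sl ^ R : ℕ) : ℝ) * ((sl : ℝ) ^ R - ((N % sl ^ R : ℕ) : ℝ)) /
          ((N : ℝ) ^ 2 * ((sl : ℝ) - 1))) ∧
      (GR (s := fun _ => sl) R C D =
          (R : ℝ) + 1 - Real.sqrt (((N % sl ^ R : ℕ) : ℝ) * ((sl : ℝ) ^ R - ((N % sl ^ R : ℕ) : ℝ)) /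
            ((N : ℝ) ^ 2 * ((sl : ℝ) - 1))) ↔
        weakStrength (fun _ => sl) D R) :=
  statement10_general hN hR hn hsl C hC D hD
end

section
/- Let s ≥ 2 and let D be a saturated design of strength 2 in N = 2s² runs with one factor at 2s levels and 2s factors at s levels (so 1·(2s−1) + 2s·(s−1) = N − 1). Then for every k ≥ 3, the projection D' of D onto any k of the s-level factors satisfies GR(D') = 4 − sqrt((s − 2)/(2s − 2)) (with R = 3), and this value is optimum: every design of strength 2 in 2s² runs with k factors at s levels has GR at most 4 − sqrt((s − 2)/(2s − 2)). -/
/-!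
With normalized orthogonal codings, `∑_j C l j * C l' j = s·[l = l'] - 1`, so the sum of squared
column sums of `X_U` equals `∑_{r,r'} ∏_{i ∈ U} (s_i δ_i(r,r') - 1)`, where `δ_i(r,r')` records
whether runs `r, r'` agree on factor `i`. Expanding the product over subsets of `U`, every proper
subset is controlled by the strength `|U| - 1`, which leaves
`N² a(U) = (∏_{i ∈ U} s_i) · #{(r,r') agreeing on U} - N²`. The diagonal pairs give the lower
bound `a₃(U) ≥ s³/N - 1 = (s - 2)/2` for `N = 2s²`, with equality iff no two distinct runs
agree on `U`.

In a saturated design of strength 2, the first two moments of `H(r,r') = ∑_i s_i δ_i(r,r')` are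
fixed by the strength, and they force `H(r,r') = n - 1` for all `r ≠ r'`: the runs are
equidistant. Here `n - 1 = 2s`, while two runs agreeing on three `s`-level factors would have
`H ≥ 3s`; hence the projection attains the bound.
-/

open Finset Matrix

theorem isNOC.sum_mul_row {m : ℕ} {C : Fin m → Fin (m - 1) → ℝ} (hC : isNOC C) (l l' : Fin m) :
    ∑ j, C l j * C l' j = (if l = l' then (m : ℝ) else 0) - 1 := by
  obtain ⟨m, rfl⟩ : ∃ m', m = m' + 1 := ⟨m - 1, by have := l.pos; omega⟩
  -- `A = [1 | C]` is square with `Aᵀ A = m • 1`, hence also `A Aᵀ = m • 1`.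
  set A : Matrix (Fin (m + 1)) (Fin (m + 1)) ℝ := of fun l => Fin.cons 1 (C l)
  have hAA : Aᵀ * A = ((m + 1 : ℕ) : ℝ) • 1 := by
    ext j j'
    simp only [mul_apply, transpose_apply, Matrix.smul_apply, Matrix.one_apply, A, of_apply]
    induction j using Fin.cases <;> induction j' using Fin.cases <;>
      simp [hC.1, hC.2, Fin.succ_ne_zero, (Fin.succ_ne_zero _).symm]
  have hm : ((m + 1 : ℕ) : ℝ) ≠ 0 := by positivity
  have hAA' : A * Aᵀ = ((m + 1 : ℕ) : ℝ) • 1 := by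
    have h := mul_eq_one_comm.mp (show (((m + 1 : ℕ) : ℝ)⁻¹ • Aᵀ) * A = 1 by
      rw [smul_mul, hAA, smul_smul, inv_mul_cancel₀ hm, one_smul])
    rwa [Matrix.mul_smul, inv_smul_eq_iff₀ hm] at h
  have h := congrFun₂ hAA' l l'
  simp only [mul_apply, transpose_apply, Matrix.smul_apply, Matrix.one_apply, A, of_apply,
    Fin.sum_univ_succ, Fin.cons_zero, Fin.cons_succ, smul_eq_mul, mul_ite, mul_one, mul_zero] at h
  exact eq_sub_of_add_eq' h

namespace hasStrength

variable {N n : ℕ} {s : Fin n → ℕ} {D : Fin N → ∀ i, Fin (s i)} {t : ℕ}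

theorem prod_dvd (hD : hasStrength s D t) {T : Finset (Fin n)} (hT : T.card = t) :
    (∏ i ∈ T, s i) ∣ N := by
  rcases Nat.eq_zero_or_pos N with rfl | hN
  · exact dvd_zero _
  have r₀ : Fin N := ⟨0, hN⟩
  set ρ : Fin N → ∀ i : T, Fin (s i) := fun r i => D r i
  have hfiber (y : ∀ i : T, Fin (s i)) : #{r | ρ r = y} = N / ∏ i ∈ T, s i := by
    rw [← hD T hT fun i => if h : i ∈ T then y ⟨i, h⟩ else D r₀ i]
    congr 1
    ext r
    simp only [mem_filter, mem_univ, true_and, ρ, funext_iff, Subtype.forall]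
    exact forall₂_congr fun i hi => by rw [dif_pos hi]
  refine Dvd.intro (N / ∏ i ∈ T, s i) ?_
  calc (∏ i ∈ T, s i) * (N / ∏ i ∈ T, s i)
      = ∑ y : ∀ i : T, Fin (s i), #{r | ρ r = y} := by
        simp only [hfiber, sum_const, card_univ, Fintype.card_pi, Fintype.card_fin, smul_eq_mul,
          prod_coe_sort]
    _ = N := by
        rw [← card_eq_sum_card_fiberwise (s := univ) (fun _ _ => mem_univ _), card_univ,
          Fintype.card_fin]

theorem of_succ_s11 (hD : hasStrength s D (t + 1)) (htn : t < n) : hasStrength s D t := by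
  intro T hT x
  obtain ⟨j, -, hj⟩ := exists_mem_notMem_of_card_lt_card
    (show T.card < (univ : Finset (Fin n)).card by simpa [hT] using htn)
  have hjT : (insert j T).card = t + 1 := by rw [card_insert_of_notMem hj, hT]
  have hfiber (y : Fin (s j)) :
      #{r | D r j = y ∧ ∀ i ∈ T, D r i = x i} = N / (s j * ∏ i ∈ T, s i) := by
    rw [← prod_insert hj, ← hD _ hjT (Function.update x j y)]
    congr 1
    ext r
    simp only [mem_filter, mem_univ, true_and, forall_mem_insert, Function.update_self]
    refine and_congr Iff.rfl (forall₂_congr fun i hi => ?_)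
    rw [Function.update_of_ne (ne_of_mem_of_not_mem hi hj)]
  obtain ⟨q, hq⟩ := hD.prod_dvd hjT
  rw [prod_insert hj] at hq
  calc #{r | ∀ i ∈ T, D r i = x i}
      = ∑ y : Fin (s j), #{r | D r j = y ∧ ∀ i ∈ T, D r i = x i} := by
        rw [card_eq_sum_card_fiberwise (f := fun r => D r j) (t := univ) fun _ _ => mem_univ _]
        simp only [filter_filter, and_comm]
    _ = N / ∏ i ∈ T, s i := by
        simp only [hfiber, sum_const, card_univ, Fintype.card_fin, smul_eq_mul]
        have hP : 0 < ∏ i ∈ T, s i := prod_pos fun i _ => (x i).pos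
        rw [hq, Nat.mul_div_cancel_left _ (Nat.mul_pos (x j).pos hP), mul_right_comm,
          Nat.mul_div_cancel _ hP]

theorem mono_s11 (hD : hasStrength s D t) (htn : t ≤ n) {t' : ℕ} (ht' : t' ≤ t) :
    hasStrength s D t' :=
  Nat.decreasingInduction (motive := fun m _ => hasStrength s D m)
    (fun _ hm ih => ih.of_succ_s11 (by omega)) hD ht'

end hasStrength

section agreeCount

variable {N n : ℕ} {s : Fin n → ℕ}

def agreeCount (D : Fin N → ∀ i, Fin (s i)) (U : Finset (Fin n)) : ℕ :=
  #{p : Fin N × Fin N | ∀ i ∈ U, D p.1 i = D p.2 i}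

variable {D : Fin N → ∀ i, Fin (s i)} {U : Finset (Fin n)}

theorem agreeCount_eq_sum_card :
    agreeCount D U = ∑ r, #{r' | ∀ i ∈ U, D r' i = D r i} := by
  simp only [agreeCount, card_filter, Fintype.sum_prod_type]
  refine sum_congr rfl fun r _ => sum_congr rfl fun r' _ => if_congr ?_ rfl rfl
  exact forall₂_congr fun _ _ => eq_comm

theorem cast_agreeCount :
    (agreeCount D U : ℝ) = ∑ r, ∑ r', ∏ i ∈ U, if D r i = D r' i then (1 : ℝ) else 0 := by
  simp only [agreeCount, card_filter, Fintype.sum_prod_type, prod_boole, Nat.cast_sum,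
    Nat.cast_ite, Nat.cast_one, Nat.cast_zero]
  congr!

theorem card_le_agreeCount : N ≤ agreeCount D U := by
  rw [agreeCount_eq_sum_card]
  calc N = ∑ r : Fin N, 1 := by simp
    _ ≤ _ := sum_le_sum fun r _ => card_pos.mpr ⟨r, by simp⟩

theorem agreeCount_eq_card (h : ∀ r r', (∀ i ∈ U, D r i = D r' i) → r = r') :
    agreeCount D U = N := by
  rw [agreeCount_eq_sum_card]
  calc ∑ r, #{r' | ∀ i ∈ U, D r' i = D r i} = ∑ r : Fin N, 1 :=
        sum_congr rfl fun r _ => card_eq_one.mpr ⟨r, by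
          ext r'; simpa using ⟨h r' r, fun h' i _ => h' ▸ rfl⟩⟩
    _ = N := by simp

theorem hasStrength.prod_mul_agreeCount {t : ℕ} (hD : hasStrength s D t) (hU : U.card = t) :
    (∏ i ∈ U, s i) * agreeCount D U = N ^ 2 := by
  rw [agreeCount_eq_sum_card, sum_congr rfl fun r _ => hD U hU (D r), sum_const, card_univ,
    Fintype.card_fin, smul_eq_mul, mul_left_comm, Nat.mul_div_cancel' (hD.prod_dvd hU), sq]

end agreeCount

section modelMatrix

variable {N n : ℕ} {s : Fin n → ℕ} {C : ∀ i, Fin (s i) → Fin (s i - 1) → ℝ}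
  {D : Fin N → ∀ i, Fin (s i)}

theorem sum_sq_sum_intCol (hC : ∀ i, isNOC (C i)) (U : Finset (Fin n)) :
    ∑ j, (∑ r, intCol C D U j r) ^ 2
      = ∑ r, ∑ r', ∏ i ∈ U, ((s i : ℝ) * (if D r i = D r' i then 1 else 0) - 1) := by
  calc ∑ j, (∑ r, intCol C D U j r) ^ 2
      = ∑ r, ∑ r', ∑ j : ∀ i : U, Fin (s i - 1),
          ∏ i : U, C i (D r i) (j i) * C i (D r' i) (j i) := by
        simp only [sq, sum_mul_sum, intCol, ← prod_mul_distrib]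
        rw [sum_comm]
        exact sum_congr rfl fun _ _ => sum_comm
    _ = ∑ r, ∑ r', ∏ i : U, ∑ j, C i (D r i) j * C i (D r' i) j := by
        simp only [Fintype.prod_sum]
    _ = _ := by
        refine sum_congr rfl fun r _ => sum_congr rfl fun r' _ => ?_
        rw [← prod_coe_sort U]
        refine prod_congr rfl fun i _ => ?_
        rw [(hC i).sum_mul_row]
        split_ifs <;> ring

theorem hasStrength.projFreq_eq {t : ℕ} (hC : ∀ i, isNOC (C i)) (hD : hasStrength s D t)
    {U : Finset (Fin n)} (hU : U.card = t + 1) :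
    projFreq C D U = ((∏ i ∈ U, (s i : ℝ)) * agreeCount D U - N ^ 2) / N ^ 2 := by
  have htn : t ≤ n := by
    have := card_le_univ U; simp only [Fintype.card_fin] at this; omega
  -- Expand `∏ (s δ - 1)` over the subsets `W` of `U`; every proper part `U \ W` is covered by
  -- the strength, which leaves only the alternating sum `∑ (-1)^|W| = 0`.
  have hterm (W : Finset (Fin n)) (hW : W ∈ U.powerset) :
      (-1 : ℝ) ^ W.card * ((∏ i ∈ U \ W, (s i : ℝ)) * agreeCount D (U \ W))
        = (-1) ^ W.card * (N : ℝ) ^ 2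
          + if W = ∅ then (∏ i ∈ U, (s i : ℝ)) * agreeCount D U - N ^ 2 else 0 := by
    split_ifs with h
    · subst h; simp
    · have hcard : (U \ W).card ≤ t := by
        rw [card_sdiff_of_subset (mem_powerset.mp hW)]
        have := card_pos.mpr (nonempty_iff_ne_empty.mpr h); omega
      have := (hD.mono_s11 htn hcard).prod_mul_agreeCount rfl
      rw [add_zero]
      congr 1
      exact_mod_cast this
  unfold projFreq
  rw [sum_sq_sum_intCol hC]
  congr 1
  calc ∑ r, ∑ r', ∏ i ∈ U, ((s i : ℝ) * (if D r i = D r' i then 1 else 0) - 1)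
      = ∑ r, ∑ r', ∑ W ∈ U.powerset, (-1 : ℝ) ^ W.card
          * ((∏ i ∈ U \ W, (s i : ℝ)) * ∏ i ∈ U \ W, if D r i = D r' i then 1 else 0) := by
        simp only [sub_eq_neg_add, prod_add, prod_const, prod_mul_distrib]
    _ = ∑ W ∈ U.powerset, (-1 : ℝ) ^ W.card
          * ((∏ i ∈ U \ W, (s i : ℝ)) * agreeCount D (U \ W)) := by
        simp only [cast_agreeCount, mul_sum]
        exact (sum_congr rfl fun _ _ => sum_comm).trans sum_comm
    _ = _ := by
        have halt : ∑ W ∈ U.powerset, (-1 : ℝ) ^ W.card = 0 := by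
          exact_mod_cast sum_powerset_neg_one_pow_card_of_nonempty (card_pos.mp (by omega))
        rw [sum_congr rfl hterm, sum_add_distrib, ← sum_mul, halt, sum_ite_eq',
          if_pos (empty_mem_powerset U), zero_mul, zero_add]

end modelMatrix

section agreeWeight

variable {N n : ℕ} {s : Fin n → ℕ}

def agreeWeight (D : Fin N → ∀ i, Fin (s i)) (r r' : Fin N) : ℝ :=
  ∑ i, (s i : ℝ) * if D r i = D r' i then 1 else 0

variable {D : Fin N → ∀ i, Fin (s i)}

theorem agreeWeight_self (r : Fin N) : agreeWeight D r r = ∑ i, (s i : ℝ) := by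
  simp [agreeWeight]

namespace hasStrength

theorem sum_sum_agree (hD : hasStrength s D 2) (hn : 2 ≤ n) (i : Fin n) :
    (s i : ℝ) * ∑ r, ∑ r', (if D r i = D r' i then (1 : ℝ) else 0) = N ^ 2 := by
  have h := (hD.mono_s11 hn one_le_two).prod_mul_agreeCount (card_singleton i)
  rw [prod_singleton] at h
  rw [← Nat.cast_pow, ← h, Nat.cast_mul, cast_agreeCount]
  simp only [prod_singleton]

theorem sum_sum_agree_mul_agree (hD : hasStrength s D 2) (hn : 2 ≤ n) (i i' : Fin n) :
    (s i : ℝ) * s i' * ∑ r, ∑ r',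
        (if D r i = D r' i then (1 : ℝ) else 0) * (if D r i' = D r' i' then 1 else 0)
      = if i = i' then (s i : ℝ) * N ^ 2 else N ^ 2 := by
  split_ifs with h
  · subst h
    have hidem (r r' : Fin N) : (if D r i = D r' i then (1 : ℝ) else 0)
        * (if D r i = D r' i then 1 else 0) = if D r i = D r' i then 1 else 0 := by
      split_ifs <;> norm_num
    simp only [hidem, mul_assoc, hD.sum_sum_agree hn]
  · have h' := hD.prod_mul_agreeCount (card_pair h)
    rw [prod_pair h] at h'
    rw [← Nat.cast_pow, ← h', Nat.cast_mul, Nat.cast_mul, cast_agreeCount]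
    simp only [prod_pair h]

theorem sum_sum_agreeWeight (hD : hasStrength s D 2) (hn : 2 ≤ n) :
    ∑ r, ∑ r', agreeWeight D r r' = n * N ^ 2 := by
  simp only [agreeWeight]
  rw [(sum_congr rfl fun _ _ => sum_comm).trans sum_comm]
  simp only [← mul_sum, hD.sum_sum_agree hn, sum_const, card_univ, Fintype.card_fin,
    nsmul_eq_mul]

theorem sum_sum_agreeWeight_sq (hD : hasStrength s D 2) (hn : 2 ≤ n) :
    ∑ r, ∑ r', agreeWeight D r r' ^ 2 = N ^ 2 * (∑ i, (s i : ℝ) + n * (n - 1)) := by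
  have hsq (r r' : Fin N) : agreeWeight D r r' ^ 2 = ∑ i, ∑ i', (s i : ℝ) * s i'
      * ((if D r i = D r' i then 1 else 0) * (if D r i' = D r' i' then 1 else 0)) := by
    simp only [agreeWeight, sq, sum_mul_sum]
    exact sum_congr rfl fun _ _ => sum_congr rfl fun _ _ => by ring
  have hrow (i : Fin n) : ∑ i', (if i = i' then (s i : ℝ) * N ^ 2 else N ^ 2)
      = ∑ i', ((N : ℝ) ^ 2 + if i = i' then ((s i : ℝ) - 1) * N ^ 2 else 0) :=
    sum_congr rfl fun _ _ => by split_ifs <;> ring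
  calc ∑ r, ∑ r', agreeWeight D r r' ^ 2
      = ∑ i, ∑ i', (s i : ℝ) * s i' * ∑ r, ∑ r',
          (if D r i = D r' i then 1 else 0) * (if D r i' = D r' i' then 1 else 0) := by
        simp only [hsq, mul_sum]
        rw [(sum_congr rfl fun _ _ => sum_comm).trans sum_comm]
        exact sum_congr rfl fun _ _ => (sum_congr rfl fun _ _ => sum_comm).trans sum_comm
    _ = _ := by
        simp only [hD.sum_sum_agree_mul_agree hn, hrow, sum_add_distrib, sum_ite_eq, mem_univ,
          if_true, sum_const, card_univ, Fintype.card_fin, nsmul_eq_mul, ← sum_mul,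
          sum_sub_distrib]
        ring

-- `hsat` is saturation, `∑ (s i - 1) = N - 1`, written without truncated subtraction.
theorem agreeWeight_eq_of_saturated (hD : hasStrength s D 2) (hn : 2 ≤ n)
    (hsat : ∑ i, s i + 1 = N + n) {r₀ r₁ : Fin N} (hr : r₀ ≠ r₁) :
    agreeWeight D r₀ r₁ = n - 1 := by
  have hsat' : ∑ i, (s i : ℝ) = N + n - 1 := by
    have := congrArg (Nat.cast (R := ℝ)) hsat
    push_cast at this
    linarith
  -- The first two moments give `∑_{r,r'} (agreeWeight - (n - 1))² = N³`, and the diagonal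
  -- alone, where `agreeWeight = ∑ s_i = N + n - 1`, already contributes `N · N²`.
  have htotal : ∑ r, ∑ r', (agreeWeight D r r' - (n - 1)) ^ 2 = (N : ℝ) * N ^ 2 := by
    have hexpand (r r' : Fin N) : (agreeWeight D r r' - (n - 1)) ^ 2
        = agreeWeight D r r' ^ 2 - 2 * (n - 1) * agreeWeight D r r' + (n - 1) ^ 2 := by ring
    simp only [hexpand, sum_add_distrib, sum_sub_distrib, ← mul_sum, hD.sum_sum_agreeWeight_sq hn,
      hD.sum_sum_agreeWeight hn, sum_const, card_univ, Fintype.card_fin, nsmul_eq_mul, hsat']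
    ring
  have hoff : ∑ r, ∑ r' ∈ univ.erase r, (agreeWeight D r r' - (n - 1)) ^ 2 = 0 := by
    rw [sum_congr rfl fun r _ => (add_sum_erase _ _ (mem_univ r)).symm, sum_add_distrib] at htotal
    simp only [agreeWeight_self, hsat', sum_const, card_univ, Fintype.card_fin,
      nsmul_eq_mul] at htotal
    linarith
  have h := (sum_eq_zero_iff_of_nonneg fun _ _ => sq_nonneg _).mp
    ((sum_eq_zero_iff_of_nonneg fun _ _ => sum_nonneg fun _ _ => sq_nonneg _).mp hoff r₀
      (mem_univ _)) r₁ (mem_erase.mpr ⟨hr.symm, mem_univ _⟩)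
  exact sub_eq_zero.mp (pow_eq_zero_iff two_ne_zero |>.mp h)

theorem agreeCount_eq_card_of_saturated (hD : hasStrength s D 2) (hn : 2 ≤ n)
    (hsat : ∑ i, s i + 1 = N + n) {V : Finset (Fin n)} (hV : n ≤ ∑ i ∈ V, s i) :
    agreeCount D V = N := by
  refine agreeCount_eq_card fun r r' hrr' => by_contra fun hr => ?_
  have hle : ∑ i ∈ V, (s i : ℝ) ≤ n - 1 := by
    rw [← hD.agreeWeight_eq_of_saturated hn hsat hr, agreeWeight]
    calc ∑ i ∈ V, (s i : ℝ) = ∑ i ∈ V, (s i : ℝ) * (if D r i = D r' i then 1 else 0) :=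
          sum_congr rfl fun i hi => by rw [if_pos (hrr' i hi), mul_one]
      _ ≤ _ := sum_le_sum_of_subset_of_nonneg (subset_univ V) fun i _ _ => by positivity
  have hV' : (n : ℝ) ≤ ∑ i ∈ V, (s i : ℝ) := by exact_mod_cast hV
  linarith

end hasStrength

end agreeWeight

theorem hasStrength.comp_cast {N n k t : ℕ} {s : Fin n → ℕ} {s' : Fin k → ℕ}
    {D : Fin N → ∀ i, Fin (s i)} (hD : hasStrength s D t) {g : Fin k → Fin n}
    (hg : Function.Injective g) (hs : ∀ j, s (g j) = s' j) :
    hasStrength s' (fun r j => Fin.cast (hs j) (D r (g j))) t := by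
  intro T hT x
  rcases Nat.eq_zero_or_pos N with rfl | hN
  · simp
  have r₀ : Fin N := ⟨0, hN⟩
  set y : ∀ i, Fin (s i) := fun i => if h : ∃ j, g j = i then
    Fin.cast ((hs _).symm.trans (congrArg s h.choose_spec)) (x h.choose) else D r₀ i
  have hy (j : Fin k) : (y (g j) : ℕ) = x j := by
    have h : ∃ j', g j' = g j := ⟨j, rfl⟩
    simp only [y, dif_pos h, Fin.val_cast]
    exact congrArg (fun j' => (x j' : ℕ)) (hg h.choose_spec)
  have hcount := hD (T.map ⟨g, hg⟩) (by rw [card_map, hT]) y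
  rw [prod_map] at hcount
  simp only [Function.Embedding.coeFn_mk, hs] at hcount
  rw [← hcount]
  congr 1
  ext r
  simp only [mem_filter, mem_univ, true_and, forall_mem_map, Function.Embedding.coeFn_mk,
    Fin.ext_iff, Fin.val_cast, hy]

theorem agreeCount_comp_cast {N n k : ℕ} {s : Fin n → ℕ} {s' : Fin k → ℕ}
    (D : Fin N → ∀ i, Fin (s i)) {g : Fin k → Fin n} (hg : Function.Injective g)
    (hs : ∀ j, s (g j) = s' j) (U : Finset (Fin k)) :
    agreeCount (fun r j => Fin.cast (hs j) (D r (g j))) U = agreeCount D (U.map ⟨g, hg⟩) := by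
  unfold agreeCount
  congr 1
  ext p
  simp only [mem_filter, mem_univ, true_and, forall_mem_map, Function.Embedding.coeFn_mk,
    Fin.cast_inj]

section GR

variable {N n m R : ℕ} {C : Fin n → Fin m → Fin (m - 1) → ℝ} {D : Fin N → Fin n → Fin m}

theorem GR_const_levels (hR : 0 < R) :
    GR (s := fun _ => m) R C D = R + 1 - Real.sqrt (sSup {v : ℝ | ∃ U : Finset (Fin n),
      U.card = R ∧ v = projFreq (s := fun _ => m) C D U / ((m : ℝ) - 1)}) := by
  refine congrArg (fun S => (R : ℝ) + 1 - Real.sqrt (sSup S)) (Set.ext fun v => ?_)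
  refine exists_congr fun U => and_congr_right fun hU => ?_
  have hne : (U : Set (Fin n)).Nonempty := by simpa [← card_pos, hU] using hR
  rw [hne.image_const, csInf_singleton]

theorem GR_eq_of_forall_projFreq_eq (hR : 0 < R) (hRn : R ≤ n) {a : ℝ}
    (h : ∀ U : Finset (Fin n), U.card = R → projFreq (s := fun _ => m) C D U = a) :
    GR (s := fun _ => m) R C D = R + 1 - Real.sqrt (a / ((m : ℝ) - 1)) := by
  obtain ⟨U₀, -, hU₀⟩ := exists_subset_card_eq (show R ≤ (univ : Finset (Fin n)).card by simpa)
  rw [GR_const_levels hR]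
  congr 2
  rw [← csSup_singleton (a / ((m : ℝ) - 1))]
  congr 1
  ext v
  simp only [Set.mem_ofPred_eq, Set.mem_singleton_iff]
  exact ⟨fun ⟨U, hU, hv⟩ => hv.trans (by rw [h U hU]), fun hv => ⟨U₀, hU₀, by rw [hv, h U₀ hU₀]⟩⟩

theorem GR_le_of_le_projFreq (hm : 1 ≤ m) (hR : 0 < R) {U : Finset (Fin n)} (hU : U.card = R)
    {a : ℝ} (h : a ≤ projFreq (s := fun _ => m) C D U) :
    GR (s := fun _ => m) R C D ≤ R + 1 - Real.sqrt (a / ((m : ℝ) - 1)) := by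
  rw [GR_const_levels hR]
  gcongr
  have hfin : {v : ℝ | ∃ U : Finset (Fin n), U.card = R ∧
      v = projFreq (s := fun _ => m) C D U / ((m : ℝ) - 1)}.Finite :=
    (Set.finite_range fun U : Finset (Fin n) =>
      projFreq (s := fun _ => m) C D U / ((m : ℝ) - 1)).subset fun v ⟨U, _, hv⟩ => ⟨U, hv.symm⟩
  have hm' : (0 : ℝ) ≤ m - 1 := by simpa using (Nat.one_le_cast (α := ℝ)).mpr hm
  exact (div_le_div_of_nonneg_right h hm').trans (le_csSup hfin.bddAbove ⟨U, hU, rfl⟩)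

end GR

theorem statement11_general {sl k : ℕ} (hsl : 2 ≤ sl) (hk : 3 ≤ k)
    (levels : Fin (2 * sl + 1) → ℕ)
    (hlev : ∀ i, levels i = if i = (0 : Fin (2 * sl + 1)) then 2 * sl else sl)
    (D : Fin (2 * sl ^ 2) → ∀ i, Fin (levels i)) (hD : hasStrength levels D 2)
    (g : Fin k → Fin (2 * sl + 1)) (hg : Function.Injective g)
    (hg0 : ∀ j, g j ≠ 0)
    (C' : Fin k → Fin sl → Fin (sl - 1) → ℝ) (hC' : ∀ i, isNOC (C' i)) :
    GR (s := fun _ => sl) 3 C'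
        (fun r j => Fin.cast ((hlev (g j)).trans (if_neg (hg0 j))) (D r (g j)))
        = 4 - Real.sqrt (((sl : ℝ) - 2) / (2 * (sl : ℝ) - 2)) ∧
      ∀ D'' : Fin (2 * sl ^ 2) → ∀ _ : Fin k, Fin sl,
        hasStrength (fun _ => sl) D'' 2 →
          GR (s := fun _ => sl) 3 C' D'' ≤ 4 - Real.sqrt (((sl : ℝ) - 2) / (2 * (sl : ℝ) - 2)) := by
  have hsat : ∑ i, levels i + 1 = 2 * sl ^ 2 + (2 * sl + 1) := by
    simp only [Fin.sum_univ_succ, hlev, Fin.succ_ne_zero, if_true, if_false, sum_const,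
      card_univ, Fintype.card_fin, smul_eq_mul]
    ring
  have hfreq (E : Fin (2 * sl ^ 2) → Fin k → Fin sl) (hE : hasStrength (fun _ => sl) E 2)
      {U : Finset (Fin k)} (hU : U.card = 3) :
      projFreq (s := fun _ => sl) C' E U
        = ((sl : ℝ) - 2) / 2 + (sl : ℝ) ^ 3 * (agreeCount E U - 2 * sl ^ 2) / (2 * sl ^ 2) ^ 2 := by
    rw [hE.projFreq_eq hC' hU, prod_const, hU]
    have : (sl : ℝ) ≠ 0 := by positivity
    field_simp
    push_cast
    ring
  have hvalue : ((3 : ℕ) : ℝ) + 1 - Real.sqrt ((((sl : ℝ) - 2) / 2) / ((sl : ℝ) - 1))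
      = 4 - Real.sqrt (((sl : ℝ) - 2) / (2 * (sl : ℝ) - 2)) := by
    rw [div_div]
    norm_num
    ring_nf
  obtain ⟨U₀, -, hU₀⟩ := exists_subset_card_eq (show 3 ≤ (univ : Finset (Fin k)).card by simpa)
  refine ⟨hvalue ▸ GR_eq_of_forall_projFreq_eq three_pos hk fun U hU => ?_, fun D'' hD'' =>
    hvalue ▸ GR_le_of_le_projFreq (by omega) three_pos hU₀ ?_⟩
  · rw [hfreq _ (hD.comp_cast hg _) hU, agreeCount_comp_cast D hg,
      hD.agreeCount_eq_card_of_saturated (by omega) hsat]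
    · simp
    · simp only [sum_map, Function.Embedding.coeFn_mk, (hlev _).trans (if_neg (hg0 _)),
        sum_const, hU, smul_eq_mul]
      omega
  · rw [hfreq D'' hD'' hU₀]
    have h : (2 * sl ^ 2 : ℝ) ≤ agreeCount D'' U₀ := by exact_mod_cast card_le_agreeCount
    exact le_add_of_nonneg_right (by have := sub_nonneg.mpr h; positivity)

/-- for a saturated `OA(2s², (2s)¹ s^{2s}, 2)` (one factor at `2s` levels,
`2s` factors at `s` levels), every projection onto `k ≥ 3` of the `s`-level factors has
`GR = 4 - sqrt((s-2)/(2s-2))`, and this is optimal among all strength-2 designs in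
`2s²` runs with `k` factors at `s` levels. -/
theorem statement11 {sl k : ℕ} (hsl : 2 ≤ sl) (hk : 3 ≤ k) (hkn : k ≤ 2 * sl)
    (levels : Fin (2 * sl + 1) → ℕ)
    (hlev : ∀ i, levels i = if i = (0 : Fin (2 * sl + 1)) then 2 * sl else sl)
    (D : Fin (2 * sl ^ 2) → ∀ i, Fin (levels i)) (hD : hasStrength levels D 2)
    (g : Fin k → Fin (2 * sl + 1)) (hg : Function.Injective g)
    (hg0 : ∀ j, g j ≠ 0)
    (C' : Fin k → Fin sl → Fin (sl - 1) → ℝ) (hC' : ∀ i, isNOC (C' i)) :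
    GR (s := fun _ => sl) 3 C'
        (fun r j => Fin.cast ((hlev (g j)).trans (if_neg (hg0 j))) (D r (g j)))
        = 4 - Real.sqrt (((sl : ℝ) - 2) / (2 * (sl : ℝ) - 2)) ∧
      ∀ D'' : Fin (2 * sl ^ 2) → ∀ _ : Fin k, Fin sl,
        hasStrength (fun _ => sl) D'' 2 →
          GR (s := fun _ => sl) 3 C' D'' ≤ 4 - Real.sqrt (((sl : ℝ) - 2) / (2 * (sl : ℝ) - 2)) :=
  statement11_general hsl hk levels hlev D hD g hg hg0 C' hC'
end

section
/- Let D be a design of strength R−1 (R ≥ 2) with n ≥ R factors, each factor given a normalized orthogonal coding, and define GR_tot(D) = R + 1 − sqrt( max over R-element sets U of factors of (1/R)·∑_{i∈U} a_R(U)/(s i − 1) ). Then GR_tot(D) ≥ GR(D), and if D is symmetric (s i = s for all i), GR_tot(D) = GR(D). -/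
open Finset Matrix

/-- `GR_tot(D) = R + 1 - sqrt(max_U (1/R)·∑_{i ∈ U} a_R(U)/(s i - 1))`. -/
noncomputable def GRtotD {N n : ℕ} {s : Fin n → ℕ} (R : ℕ)
    (C : ∀ i, Fin (s i) → Fin (s i - 1) → ℝ) (D : Fin N → ∀ i, Fin (s i)) : ℝ :=
  (R : ℝ) + 1 - Real.sqrt (sSup {v : ℝ | ∃ U : Finset (Fin n), U.card = R ∧
    v = (1 / (R : ℝ)) * ∑ i ∈ U, projFreq C D U / ((s i : ℝ) - 1)})

/-- `GR_tot(D) ≥ GR(D)`, with equality for symmetric designs. -/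
theorem statement15 {N n R : ℕ} (hN : 1 ≤ N) (hR : 2 ≤ R) (hn : R ≤ n)
    {s : Fin n → ℕ} (hs : ∀ i, 2 ≤ s i)
    (D : Fin N → ∀ i, Fin (s i)) (hD : hasStrength s D (R - 1))
    (C : ∀ i, Fin (s i) → Fin (s i - 1) → ℝ) (hC : ∀ i, isNOC (C i)) :
    GR R C D ≤ GRtotD R C D ∧
      ((∀ i j : Fin n, s i = s j) → GRtotD R C D = GR R C D) := by
  classical
  have hproj : ∀ U : Finset (Fin n), 0 ≤ projFreq C D U := by
    intro U
    unfold projFreq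
    positivity
  have hRpos : (0:ℝ) < (R:ℝ) := by
    have : (2:ℝ) ≤ (R:ℝ) := by exact_mod_cast hR
    linarith
  have hUfacts : ∀ U : Finset (Fin n), U.card = R →
      ∃ j ∈ U, sInf (s '' (U : Set (Fin n))) = s j := by
    intro U hU
    have hUne : U.Nonempty := Finset.card_pos.mp (by omega)
    obtain ⟨i, hi⟩ := hUne
    have hne : (s '' (U : Set (Fin n))).Nonempty := ⟨s i, ⟨i, hi, rfl⟩⟩
    obtain ⟨j, hj, hjs⟩ := Nat.sInf_mem hne
    exact ⟨j, hj, hjs.symm⟩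
  -- key pointwise inequality
  have key : ∀ U : Finset (Fin n), U.card = R →
      (1 / (R : ℝ)) * ∑ i ∈ U, projFreq C D U / ((s i : ℝ) - 1) ≤
        projFreq C D U / (((sInf (s '' (U : Set (Fin n))) : ℕ) : ℝ) - 1) := by
    intro U hU
    obtain ⟨j, hj, hjm⟩ := hUfacts U hU
    set m := sInf (s '' (U : Set (Fin n))) with hm
    have hm2 : 2 ≤ m := hjm ▸ hs j
    have hm1 : (0:ℝ) < (m:ℝ) - 1 := by
      have : (2:ℝ) ≤ (m:ℝ) := by exact_mod_cast hm2
      linarith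
    have hle : ∀ i ∈ U, projFreq C D U / ((s i:ℝ) - 1) ≤ projFreq C D U / ((m:ℝ) - 1) := by
      intro i hi
      have hmi : m ≤ s i := Nat.sInf_le ⟨i, hi, rfl⟩
      have hmi' : (m:ℝ) ≤ (s i:ℝ) := by exact_mod_cast hmi
      apply div_le_div_of_nonneg_left (hproj U) hm1 (by linarith)
    have hsum : ∑ i ∈ U, projFreq C D U / ((s i:ℝ) - 1) ≤
        (R:ℝ) * (projFreq C D U / ((m:ℝ) - 1)) := by
      calc ∑ i ∈ U, projFreq C D U / ((s i:ℝ) - 1)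
          ≤ ∑ _i ∈ U, projFreq C D U / ((m:ℝ) - 1) := Finset.sum_le_sum hle
        _ = (R:ℝ) * (projFreq C D U / ((m:ℝ) - 1)) := by
            rw [Finset.sum_const, hU, nsmul_eq_mul]
    calc (1 / (R : ℝ)) * ∑ i ∈ U, projFreq C D U / ((s i : ℝ) - 1)
        ≤ (1 / (R : ℝ)) * ((R:ℝ) * (projFreq C D U / ((m:ℝ) - 1))) := by
          apply mul_le_mul_of_nonneg_left hsum (by positivity)
      _ = projFreq C D U / ((m:ℝ) - 1) := by
          field_simp
  have keyeq : (∀ i j : Fin n, s i = s j) → ∀ U : Finset (Fin n), U.card = R →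
      (1 / (R : ℝ)) * ∑ i ∈ U, projFreq C D U / ((s i : ℝ) - 1) =
        projFreq C D U / (((sInf (s '' (U : Set (Fin n))) : ℕ) : ℝ) - 1) := by
    intro hsym U hU
    obtain ⟨j, hj, hjm⟩ := hUfacts U hU
    set m := sInf (s '' (U : Set (Fin n))) with hm
    have hall : ∀ i ∈ U, ((s i : ℝ)) = (m:ℝ) := by
      intro i hi
      have : s i = s j := hsym i j
      rw [this, ← hjm]
    have hsum : ∑ i ∈ U, projFreq C D U / ((s i:ℝ) - 1) =
        (R:ℝ) * (projFreq C D U / ((m:ℝ) - 1)) := by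
      calc ∑ i ∈ U, projFreq C D U / ((s i:ℝ) - 1)
          = ∑ _i ∈ U, projFreq C D U / ((m:ℝ) - 1) := by
            apply Finset.sum_congr rfl
            intro i hi
            rw [hall i hi]
        _ = (R:ℝ) * (projFreq C D U / ((m:ℝ) - 1)) := by
            rw [Finset.sum_const, hU, nsmul_eq_mul]
    rw [hsum]
    field_simp
  -- sup facts
  have hS1fin : {v : ℝ | ∃ U : Finset (Fin n), U.card = R ∧
      v = projFreq C D U / (((sInf (s '' (U : Set (Fin n))) : ℕ) : ℝ) - 1)}.Finite := by
    apply Set.Finite.subset (Set.finite_range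
      (fun U : Finset (Fin n) => projFreq C D U / (((sInf (s '' (U : Set (Fin n))) : ℕ) : ℝ) - 1)))
    rintro v ⟨U, hU, rfl⟩
    exact ⟨U, rfl⟩
  obtain ⟨U₀, hU₀sub, hU₀⟩ := Finset.exists_subset_card_eq
    (s := (Finset.univ : Finset (Fin n))) (n := R) (by simpa using hn)
  have hS2ne : {v : ℝ | ∃ U : Finset (Fin n), U.card = R ∧
      v = (1 / (R : ℝ)) * ∑ i ∈ U, projFreq C D U / ((s i : ℝ) - 1)}.Nonempty :=
    ⟨_, U₀, hU₀, rfl⟩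
  have hsup : sSup {v : ℝ | ∃ U : Finset (Fin n), U.card = R ∧
      v = (1 / (R : ℝ)) * ∑ i ∈ U, projFreq C D U / ((s i : ℝ) - 1)} ≤
      sSup {v : ℝ | ∃ U : Finset (Fin n), U.card = R ∧
      v = projFreq C D U / (((sInf (s '' (U : Set (Fin n))) : ℕ) : ℝ) - 1)} := by
    apply csSup_le hS2ne
    rintro v ⟨U, hU, rfl⟩
    exact le_trans (key U hU) (le_csSup hS1fin.bddAbove ⟨U, hU, rfl⟩)
  constructor
  · have h := Real.sqrt_le_sqrt hsup
    unfold GR GRtotD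
    linarith
  · intro hsym
    have hset : {v : ℝ | ∃ U : Finset (Fin n), U.card = R ∧
        v = (1 / (R : ℝ)) * ∑ i ∈ U, projFreq C D U / ((s i : ℝ) - 1)} =
        {v : ℝ | ∃ U : Finset (Fin n), U.card = R ∧
        v = projFreq C D U / (((sInf (s '' (U : Set (Fin n))) : ℕ) : ℝ) - 1)} := by
      ext v
      constructor
      · rintro ⟨U, hU, rfl⟩
        exact ⟨U, hU, (keyeq hsym U hU)⟩
      · rintro ⟨U, hU, rfl⟩
        exact ⟨U, hU, (keyeq hsym U hU).symm⟩
    unfold GRtotD GR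
    rw [hset]
end

section
/- Let G be a nonempty finite set and f : G → ℕ a function with ∑_{x∈G} f x = N. Write N = q·|G| + r with q, r ∈ ℕ and 0 ≤ r < |G|. Then ∑_{x∈G} (f x − N/|G|)² ≥ r(|G| − r)/|G| (as real numbers), and equality holds if and only if f x ∈ {q, q+1} for every x ∈ G. -/
open Finset

/-- for a nonempty finite set `G` and `f : G → ℕ` with total sum
`N = q·|G| + r`, `0 ≤ r < |G|`, the sum of squared deviations of `f` from the mean
`N/|G|` is at least `r(|G| - r)/|G|`, with equality iff `f` takes only the values `q`
and `q + 1` on `G`. -/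
theorem statement18 {α : Type*} [DecidableEq α] (G : Finset α) (hG : G.Nonempty)
    (f : α → ℕ) (N q r : ℕ) (hsum : ∑ x ∈ G, f x = N)
    (hqr : N = q * G.card + r) (hr : r < G.card) :
    (r : ℝ) * ((G.card : ℝ) - (r : ℝ)) / (G.card : ℝ)
        ≤ ∑ x ∈ G, ((f x : ℝ) - (N : ℝ) / (G.card : ℝ)) ^ 2 ∧
      (∑ x ∈ G, ((f x : ℝ) - (N : ℝ) / (G.card : ℝ)) ^ 2
          = (r : ℝ) * ((G.card : ℝ) - (r : ℝ)) / (G.card : ℝ) ↔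
        ∀ x ∈ G, f x = q ∨ f x = q + 1) := by
  have hn0 : 0 < G.card := card_pos.mpr hG
  have hnR : (0:ℝ) < (G.card : ℝ) := by exact_mod_cast hn0
  set g : α → ℤ := fun x => (f x : ℤ) - q with hg
  have hNZ : (N : ℤ) = q * G.card + r := by exact_mod_cast hqr
  have hsumZ : ∑ x ∈ G, (f x : ℤ) = N := by exact_mod_cast hsum
  have hsg : ∑ x ∈ G, g x = r := by
    simp only [hg, Finset.sum_sub_distrib, hsumZ, Finset.sum_const, nsmul_eq_mul]
    rw [hNZ]; ring
  -- pointwise inequality in ℤ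
  have hpt : ∀ m : ℤ, m ≤ m ^ 2 := by
    intro m
    rcases le_or_gt m 0 with h | h
    · nlinarith [sq_nonneg m]
    · nlinarith
  -- sum inequality in ℤ
  have hle : ∑ x ∈ G, g x ≤ ∑ x ∈ G, (g x) ^ 2 :=
    Finset.sum_le_sum fun x _ => hpt (g x)
  -- key identity
  have hgr : ∑ x ∈ G, ((g x : ℝ)) = r := by exact_mod_cast hsg
  have hNR : (N : ℝ) = q * G.card + r := by exact_mod_cast hqr
  have key : ∑ x ∈ G, ((f x : ℝ) - (N : ℝ) / (G.card : ℝ)) ^ 2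
      = (∑ x ∈ G, ((g x : ℝ)) ^ 2) - (r:ℝ)^2 / (G.card : ℝ) := by
    have hrw : ∀ x ∈ G, ((f x : ℝ) - (N : ℝ) / (G.card : ℝ)) ^ 2
        = ((g x : ℝ))^2 - 2 * ((r:ℝ)/(G.card:ℝ)) * (g x : ℝ) + ((r:ℝ)/(G.card:ℝ))^2 := by
      intro x hx
      have h1 : (f x : ℝ) - (N : ℝ) / (G.card : ℝ) = (g x : ℝ) - (r:ℝ)/(G.card:ℝ) := by
        simp only [hg]
        push_cast
        field_simp
        rw [hNR]; ring
      rw [h1]; ring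
    rw [Finset.sum_congr rfl hrw, Finset.sum_add_distrib, Finset.sum_sub_distrib,
      ← Finset.mul_sum, hgr, Finset.sum_const, nsmul_eq_mul]
    field_simp
    ring
  have hgoal : (r : ℝ) * ((G.card : ℝ) - (r : ℝ)) / (G.card : ℝ)
      = (r:ℝ) - (r:ℝ)^2 / (G.card:ℝ) := by field_simp
  have hsumR : (r:ℝ) ≤ ∑ x ∈ G, ((g x : ℝ)) ^ 2 := by
    have : ((r:ℤ) : ℝ) ≤ ((∑ x ∈ G, (g x)^2 : ℤ) : ℝ) := by
      exact_mod_cast (hsg ▸ hle)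
    push_cast at this
    exact_mod_cast this
  constructor
  · rw [key, hgoal]; linarith
  · rw [key, hgoal]
    have hiffsum : (∑ x ∈ G, ((g x : ℝ)) ^ 2 = (r:ℝ)) ↔ ∑ x ∈ G, (g x) ^ 2 = (r:ℤ) := by
      constructor
      · intro h
        have : ((∑ x ∈ G, (g x)^2 : ℤ) : ℝ) = ((r:ℤ):ℝ) := by push_cast; push_cast at h; linarith
        exact_mod_cast this
      · intro h
        have : ((∑ x ∈ G, (g x)^2 : ℤ) : ℝ) = ((r:ℤ):ℝ) := by exact_mod_cast h
        push_cast at this; linarith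
    constructor
    · intro h
      have hs : ∑ x ∈ G, (g x) ^ 2 = ∑ x ∈ G, g x := by
        rw [hsg]
        exact hiffsum.mp (by linarith)
      have := (Finset.sum_eq_sum_iff_of_le (fun x _ => hpt (g x))).mp hs.symm
      intro x hx
      have he := (this x hx).symm
      have : g x * (g x - 1) = 0 := by nlinarith [he]
      rcases mul_eq_zero.mp this with h0 | h1
      · left
        have : (f x : ℤ) = q := by simp only [hg] at h0; omega
        exact_mod_cast this
      · right
        have : (f x : ℤ) = q + 1 := by simp only [hg] at h1; omega
        exact_mod_cast this
    · intro h
      have hs : ∑ x ∈ G, (g x) ^ 2 = (r:ℤ) := by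
        rw [← hsg]
        apply Finset.sum_congr rfl
        intro x hx
        rcases h x hx with h0 | h1
        · simp only [hg, h0]; push_cast; ring
        · simp only [hg, h1]; push_cast; ring
      have := hiffsum.mpr hs
      linarith
end
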